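/- arXiv:1303.5780 — 4 statements merged into one kernel-verified Lean document; each statement's English description precedes it below -/
import Mathlib

section
/- Let 2 ≤ d ≤ n−1. If P′ is a partitioning of the sets Σ_i^d that strictly refines the box partitioning (every part of P′ is contained in a part of the box partitioning, and at least one part of the box partitioning is properly split), then the ideal determined by P′ is not a polarization of I_d. Consequently the box polarization of I_d is a maximal polarization. -/
open MvPolynomial

/-- A squarefree monomial ideal: an ideal generated by squarefree monomials. -/
def IsSqFreeMonomialIdeal {k : Type*} [Field k] {V : Type*}
    (I : Ideal (MvPolynomial V k)) : Prop :=
  ∃ G : Set (Finset V),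
    I = Ideal.span ((fun σ : Finset V => ∏ v ∈ σ, (X v : MvPolynomial V k)) '' G)

/-- The list of differences `x_i^(1) - x_i^(j)`, `2 ≤ j ≤ r i`. -/
noncomputable def polDiffs (k : Type*) [Field k] {n : ℕ} (r : Fin n → ℕ) :
    List (MvPolynomial ((i : Fin n) × Fin (r i)) k) :=
  (List.finRange n).flatMap fun i =>
    (((List.finRange (r i)).filter fun j => 0 < j.val).map fun j =>
      X ⟨i, ⟨0, Nat.lt_of_le_of_lt (Nat.zero_le _) j.isLt⟩⟩ - X ⟨i, j⟩)

/-- `J` is a polarization of `I`. -/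
def IsPolarization {k : Type*} [Field k] {n : ℕ} (r : Fin n → ℕ)
    (I : Ideal (MvPolynomial (Fin n) k))
    (J : Ideal (MvPolynomial ((i : Fin n) × Fin (r i)) k)) : Prop :=
  IsSqFreeMonomialIdeal J ∧
  RingTheory.Sequence.IsRegular (MvPolynomial ((i : Fin n) × Fin (r i)) k ⧸ J) (polDiffs k r) ∧
  Ideal.map (MvPolynomial.rename Sigma.fst :
      MvPolynomial ((i : Fin n) × Fin (r i)) k →ₐ[k] MvPolynomial (Fin n) k) J = I

/-- The Alexander dual of a squarefree monomial ideal. -/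
noncomputable def alexDual {k : Type*} [Field k] {V : Type*} [DecidableEq V]
    (J : Ideal (MvPolynomial V k)) : Ideal (MvPolynomial V k) :=
  Ideal.span {m | ∃ τ : Finset V, m = ∏ v ∈ τ, X v ∧
    ∀ σ : Finset V, (∏ v ∈ σ, (X v : MvPolynomial V k)) ∈ J → (τ ∩ σ).Nonempty}

/-- `I_d`, generated by all squarefree monomials of degree `d`. -/
noncomputable def sqfPow (k : Type*) [Field k] (n d : ℕ) : Ideal (MvPolynomial (Fin n) k) :=
  Ideal.span {m | ∃ σ : Finset (Fin n), σ.card = d ∧ m = ∏ i ∈ σ, X i}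

/-- `p` is a partitioning of the sets `Σ_i^d = {σ ⊆ [n] : |σ| = d-1, i ∉ σ}` into the
nonempty parts `P_{i,j} = {σ ∈ Σ_i^d : p i σ = j}` (1 ≤ j ≤ r i). -/
def IsPartitioning (n d : ℕ) (r : Fin n → ℕ)
    (p : (i : Fin n) → Finset (Fin n) → Fin (r i)) : Prop :=
  ∀ (i : Fin n) (j : Fin (r i)),
    ∃ σ : Finset (Fin n), σ.card = d - 1 ∧ i ∉ σ ∧ p i σ = j

/-- The ideal determined by a partitioning: generated, for each `σ ⊆ [n]` with `|σ| = d`,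
by `m_σ = ∏_{i ∈ σ} x_i^{(j_i)}` where `σ∖{i} ∈ P_{i,j_i}`. -/
noncomputable def detIdeal (k : Type*) [Field k] {n : ℕ} (d : ℕ) (r : Fin n → ℕ)
    (p : (i : Fin n) → Finset (Fin n) → Fin (r i)) :
    Ideal (MvPolynomial ((i : Fin n) × Fin (r i)) k) :=
  Ideal.span {m | ∃ σ : Finset (Fin n), σ.card = d ∧
    m = ∏ i ∈ σ, X (⟨i, p i (σ.erase i)⟩ : (i : Fin n) × Fin (r i))}

/-- The box partitioning: `σ ∈ Σ_i^d` is placed in the part indexed by the position of `i`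
in `σ ∪ {i}` (in increasing order), i.e. by `|{s ∈ σ : s < i}|` (zero-based). -/
def boxLabel {n : ℕ} (d : ℕ) (hd : 0 < d) (i : Fin n) (σ : Finset (Fin n)) : Fin d :=
  if h : (σ.filter fun s => s < i).card < d then ⟨_, h⟩ else ⟨0, hd⟩

section Aux

open RingTheory.Sequence

/-- Splitting a sorted list at a member. -/
lemma list_split_sorted {α : Type*} [Preorder α] (c : α) (l : List α)
    (hl : l.Pairwise (· < ·)) (hc : c ∈ l) :
    ∃ l₁ l₂ : List α, l = l₁ ++ c :: l₂ ∧ (∀ x ∈ l₁, x < c) ∧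
      (∀ x ∈ l, x < c → x ∈ l₁) := by
  induction l with
  | nil => cases hc
  | cons a t ih =>
    rw [List.pairwise_cons] at hl
    rcases List.mem_cons.mp hc with rfl | hct
    · refine ⟨[], t, rfl, by simp, ?_⟩
      intro x hx hxc
      rcases List.mem_cons.mp hx with rfl | hxt
      · exact absurd hxc (lt_irrefl _)
      · exact absurd hxc (asymm (hl.1 x hxt))
    · obtain ⟨l₁, l₂, heq, h1, h2⟩ := ih hl.2 hct
      have hac : a < c := hl.1 c hct
      refine ⟨a :: l₁, l₂, by rw [List.cons_append, heq], ?_, ?_⟩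
      · intro x hx
        rcases List.mem_cons.mp hx with rfl | h
        exacts [hac, h1 x h]
      · intro x hx hxc
        rcases List.mem_cons.mp hx with rfl | hxt
        · exact List.mem_cons_self
        · exact List.mem_cons_of_mem _ (h2 x hxt hxc)

set_option maxHeartbeats 1000000 in
set_option synthInstance.maxHeartbeats 1000000 in
/-- The key algebraic lemma: a "split plus mismatch" configuration implies the
sequence of polarization differences is not regular on the quotient. -/
lemma key_not_regular {k : Type*} [Field k] {n d : ℕ} {r : Fin n → ℕ}
    {p : (i : Fin n) → Finset (Fin n) → Fin (r i)}
    {v z : Fin n} {β₁ β₂ : Finset (Fin n)}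
    (hvz : v < z) (hz1 : z ∈ β₁) (hz2 : z ∉ β₂)
    (hv1 : v ∉ β₁) (hv2 : v ∉ β₂)
    (hcard : (β₁ ∪ β₂).card = d)
    (hc1 : (insert v β₁).card = d) (hc2 : (insert v β₂).card = d)
    (hsplitv : p v β₁ ≠ p v β₂)
    (hmm2 : p z ((β₁ ∪ β₂).erase z) ≠ p z ((insert v β₁).erase z)) :
    ¬ RingTheory.Sequence.IsRegular
      (MvPolynomial ((i : Fin n) × Fin (r i)) k ⧸ detIdeal k d r p) (polDiffs k r) := by
  intro hreg
  classical
  set J := detIdeal k d r p with hJdef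
  set χ : ((i : Fin n) × Fin (r i)) → k := fun q =>
    if q.1 ∈ β₁ ∪ β₂ ∧ (q.1 < v ∨ (q.1 ∈ β₁ ∧ q.2 = p q.1 ((insert v β₁).erase q.1))
        ∨ (q.1 ∈ β₂ ∧ q.2 = p q.1 ((insert v β₂).erase q.1))) then (1:k) else 0 with hχdef
  have hvD : v ∉ β₁ ∪ β₂ := by
    simp [Finset.mem_union, hv1, hv2]
  have hχv : ∀ m : Fin (r v), χ ⟨v, m⟩ = 0 := by
    intro m
    simp only [hχdef]
    rw [if_neg]
    rintro ⟨h, -⟩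
    exact hvD h
  have hχlt : ∀ s : Fin n, s < v → ∀ m : Fin (r s),
      χ ⟨s, m⟩ = (if s ∈ β₁ ∪ β₂ then (1:k) else 0) := by
    intro s hs m
    by_cases hD : s ∈ β₁ ∪ β₂
    · simp only [hχdef]
      rw [if_pos ⟨hD, Or.inl hs⟩, if_pos hD]
    · simp only [hχdef]
      rw [if_neg (fun h => hD h.1), if_neg hD]
  have hkerJ : J ≤ RingHom.ker (MvPolynomial.eval χ) := by
    rw [hJdef, detIdeal]
    refine Ideal.span_le.mpr ?_
    rintro m ⟨F, hFc, rfl⟩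
    simp only [SetLike.mem_coe, RingHom.mem_ker, map_prod, MvPolynomial.eval_X]
    by_cases hFD : F ⊆ β₁ ∪ β₂
    · have hFeq : F = β₁ ∪ β₂ := Finset.eq_of_subset_of_card_le hFD (by rw [hcard, hFc])
      subst hFeq
      refine Finset.prod_eq_zero (Finset.mem_union_left _ hz1) ?_
      simp only [hχdef]
      rw [if_neg]
      rintro ⟨-, h | ⟨h1, h2⟩ | ⟨h1, h2⟩⟩
      · exact absurd h (asymm hvz)
      · exact hmm2 h2
      · exact hz2 h1
    · obtain ⟨s, hsF, hsD⟩ := Finset.not_subset.mp hFD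
      refine Finset.prod_eq_zero hsF ?_
      simp only [hχdef]
      rw [if_neg]
      rintro ⟨h, -⟩
      exact hsD h
  -- the two monomials
  set w₁ : MvPolynomial ((i : Fin n) × Fin (r i)) k :=
    ∏ s ∈ β₁, X (⟨s, p s ((insert v β₁).erase s)⟩ : (i : Fin n) × Fin (r i)) with hw₁
  set w₂ : MvPolynomial ((i : Fin n) × Fin (r i)) k :=
    ∏ s ∈ β₂, X (⟨s, p s ((insert v β₂).erase s)⟩ : (i : Fin n) × Fin (r i)) with hw₂
  have hevalw : MvPolynomial.eval χ (w₁ * w₂) = 1 := by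
    rw [map_mul, hw₁, hw₂, map_prod, map_prod]
    rw [Finset.prod_congr rfl (fun s hs => ?_), Finset.prod_const_one, one_mul]
    · refine Finset.prod_eq_one (fun s hs => ?_)
      rw [MvPolynomial.eval_X]
      simp only [hχdef]
      simp [Finset.mem_union, hs]
    · rw [MvPolynomial.eval_X]
      simp only [hχdef]
      simp [Finset.mem_union, hs]
  have hgen1 : (X (⟨v, p v β₁⟩ : (i : Fin n) × Fin (r i)) :
      MvPolynomial ((i : Fin n) × Fin (r i)) k) * w₁ ∈ J := by
    have hident : (X (⟨v, p v β₁⟩ : (i : Fin n) × Fin (r i)) :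
        MvPolynomial ((i : Fin n) × Fin (r i)) k) * w₁
        = ∏ s ∈ insert v β₁, X (⟨s, p s ((insert v β₁).erase s)⟩ : (i : Fin n) × Fin (r i)) := by
      rw [Finset.prod_insert hv1, Finset.erase_insert hv1]
    rw [hident, hJdef, detIdeal]
    exact Ideal.subset_span ⟨insert v β₁, hc1, rfl⟩
  have hgen2 : (X (⟨v, p v β₂⟩ : (i : Fin n) × Fin (r i)) :
      MvPolynomial ((i : Fin n) × Fin (r i)) k) * w₂ ∈ J := by
    have hident : (X (⟨v, p v β₂⟩ : (i : Fin n) × Fin (r i)) :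
        MvPolynomial ((i : Fin n) × Fin (r i)) k) * w₂
        = ∏ s ∈ insert v β₂, X (⟨s, p s ((insert v β₂).erase s)⟩ : (i : Fin n) × Fin (r i)) := by
      rw [Finset.prod_insert hv2, Finset.erase_insert hv2]
    rw [hident, hJdef, detIdeal]
    exact Ideal.subset_span ⟨insert v β₂, hc2, rfl⟩
  -- min and max of the two labels at `v`
  set u₁ : Fin (r v) := p v β₁ with hu₁
  set u₂ : Fin (r v) := p v β₂ with hu₂
  set jM : Fin (r v) := max u₁ u₂ with hjM
  set jm : Fin (r v) := min u₁ u₂ with hjm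
  have hjmM : jm < jM := min_lt_max.mpr hsplitv
  have hjMpos : 0 < jM.val := Nat.lt_of_le_of_lt (Nat.zero_le _) hjmM
  -- split the list of differences
  obtain ⟨l₁, l₂, hfin, hl₁, -⟩ := list_split_sorted v (List.finRange n)
    (List.pairwise_lt_finRange n) (List.mem_finRange v)
  have hlipair : ((List.finRange (r v)).filter fun j => 0 < j.val).Pairwise (· < ·) :=
    List.Pairwise.sublist List.filter_sublist (List.pairwise_lt_finRange _)
  have hjMli : jM ∈ (List.finRange (r v)).filter fun j => 0 < j.val :=
    List.mem_filter.mpr ⟨List.mem_finRange _, by simpa using hjMpos⟩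
  obtain ⟨m₁, m₂, hli, hm₁, hm₁mem⟩ := list_split_sorted jM _ hlipair hjMli
  set gv : Fin (r v) → MvPolynomial ((i : Fin n) × Fin (r i)) k := fun j =>
    X ⟨v, ⟨0, Nat.lt_of_le_of_lt (Nat.zero_le _) j.isLt⟩⟩ - X ⟨v, j⟩ with hgv
  set fdiff : Fin n → List (MvPolynomial ((i : Fin n) × Fin (r i)) k) := fun i =>
    ((List.finRange (r i)).filter fun j => 0 < j.val).map fun j =>
      X ⟨i, ⟨0, Nat.lt_of_le_of_lt (Nat.zero_le _) j.isLt⟩⟩ - X ⟨i, j⟩ with hfdiff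
  set P : List (MvPolynomial ((i : Fin n) × Fin (r i)) k) :=
    l₁.flatMap fdiff ++ m₁.map gv with hP
  have hpol : polDiffs k r = P ++ gv jM :: (m₂.map gv ++ l₂.flatMap fdiff) := by
    show (List.finRange n).flatMap fdiff = _
    rw [hfin, List.flatMap_append, List.flatMap_cons]
    have hfv : fdiff v = m₁.map gv ++ gv jM :: m₂.map gv := by
      rw [hfdiff]
      show ((List.finRange (r v)).filter fun j => 0 < j.val).map gv = _
      rw [hli, List.map_append, List.map_cons]
    rw [hfv, hP]
    simp [List.append_assoc]
  have hPker : ∀ x ∈ P, MvPolynomial.eval χ x = 0 := by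
    intro x hx
    rcases List.mem_append.mp hx with hx | hx
    · obtain ⟨i, hil, hxi⟩ := List.mem_flatMap.mp hx
      obtain ⟨j, hj, rfl⟩ := List.mem_map.mp hxi
      have hiv : i < v := hl₁ i hil
      simp only [map_sub, MvPolynomial.eval_X]
      rw [hχlt i hiv, hχlt i hiv, sub_self]
    · obtain ⟨j, hj, rfl⟩ := List.mem_map.mp hx
      simp only [hgv, map_sub, MvPolynomial.eval_X]
      rw [hχv, hχv, sub_self]
  -- membership of δ * w in ofList P ⊔ J
  have hterm2 : ((X ⟨v, jm⟩ : MvPolynomial ((i : Fin n) × Fin (r i)) k) - X ⟨v, jM⟩)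
      * (w₁ * w₂) ∈ J := by
    have hmain : ((X ⟨v, u₁⟩ : MvPolynomial ((i : Fin n) × Fin (r i)) k) - X ⟨v, u₂⟩)
        * (w₁ * w₂) = (X ⟨v, u₁⟩ * w₁) * w₂ - (X ⟨v, u₂⟩ * w₂) * w₁ := by ring
    have hJmain : ((X ⟨v, u₁⟩ : MvPolynomial ((i : Fin n) × Fin (r i)) k) - X ⟨v, u₂⟩)
        * (w₁ * w₂) ∈ J := by
      rw [hmain]
      exact sub_mem (Ideal.mul_mem_right _ _ hgen1) (Ideal.mul_mem_right _ _ hgen2)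
    rcases le_total u₁ u₂ with h | h
    · have h1 : jm = u₁ := min_eq_left h
      have h2 : jM = u₂ := max_eq_right h
      rw [h1, h2]
      exact hJmain
    · have h1 : jm = u₂ := min_eq_right h
      have h2 : jM = u₁ := max_eq_left h
      rw [h1, h2]
      have : ((X ⟨v, u₂⟩ : MvPolynomial ((i : Fin n) × Fin (r i)) k) - X ⟨v, u₁⟩)
          * (w₁ * w₂) = -(((X ⟨v, u₁⟩ : MvPolynomial ((i : Fin n) × Fin (r i)) k) - X ⟨v, u₂⟩)
          * (w₁ * w₂)) := by ring
      rw [this]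
      exact neg_mem hJmain
  have hdelta_mem : gv jM * (w₁ * w₂) ∈ Ideal.ofList P ⊔ J := by
    have hsplitδ : gv jM * (w₁ * w₂) = gv jm * (w₁ * w₂)
        + ((X ⟨v, jm⟩ - X ⟨v, jM⟩) * (w₁ * w₂)) := by
      simp only [hgv]
      have h00 : (X (⟨v, ⟨0, Nat.lt_of_le_of_lt (Nat.zero_le _) jm.isLt⟩⟩ :
          (i : Fin n) × Fin (r i)) : MvPolynomial ((i : Fin n) × Fin (r i)) k)
          = X ⟨v, ⟨0, Nat.lt_of_le_of_lt (Nat.zero_le _) jM.isLt⟩⟩ := rfl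
      rw [h00]
      ring
    by_cases hjm0 : jm.val = 0
    · have hgvjm : gv jm = 0 := by
        show (X (⟨v, ⟨0, Nat.lt_of_le_of_lt (Nat.zero_le jm.val) jm.isLt⟩⟩ :
          (i : Fin n) × Fin (r i)) : MvPolynomial ((i : Fin n) × Fin (r i)) k)
          - X ⟨v, jm⟩ = 0
        have h0 : (⟨0, Nat.lt_of_le_of_lt (Nat.zero_le jm.val) jm.isLt⟩ : Fin (r v)) = jm :=
          Fin.ext (by simp [hjm0])
        rw [h0, sub_self]
      rw [hsplitδ, hgvjm, zero_mul, zero_add]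
      exact Ideal.mem_sup_right hterm2
    · have hjmpos : 0 < jm.val := Nat.pos_of_ne_zero hjm0
      have hjmmem : gv jm ∈ P := by
        rw [hP]
        refine List.mem_append.mpr (Or.inr (List.mem_map.mpr ⟨jm, ?_, rfl⟩))
        exact hm₁mem jm (List.mem_filter.mpr ⟨List.mem_finRange _, by simpa using hjmpos⟩) hjmM
      rw [hsplitδ]
      exact add_mem
        (Ideal.mem_sup_left (Ideal.mul_mem_right _ _ (Ideal.subset_span hjmmem)))
        (Ideal.mem_sup_right hterm2)
  -- module-theoretic endgame
  have hsmulmk : ∀ a b : MvPolynomial ((i : Fin n) × Fin (r i)) k,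
      a • (Ideal.Quotient.mk J b) = Ideal.Quotient.mk J (a * b) := by
    intro a b
    rw [← Ideal.Quotient.mk_eq_mk, ← Ideal.Quotient.mk_eq_mk, ← smul_eq_mul,
      Submodule.Quotient.mk_smul]
  have hwreg := hreg.toIsWeaklyRegular
  rw [hpol] at hwreg
  have h2 := ((RingTheory.Sequence.isWeaklyRegular_append_iff _ _ _).mp hwreg).2
  have h3 := ((RingTheory.Sequence.isWeaklyRegular_cons_iff _ _ _).mp h2).1
  set N : Submodule (MvPolynomial ((i : Fin n) × Fin (r i)) k)
      (MvPolynomial ((i : Fin n) × Fin (r i)) k ⧸ J) :=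
    Ideal.ofList P • ⊤ with hN
  set W := Submodule.Quotient.mk (p := N) (Ideal.Quotient.mk J (w₁ * w₂)) with hW
  have hW0 : gv jM • W = 0 := by
    rw [hW, ← Submodule.Quotient.mk_smul, hsmulmk, Submodule.Quotient.mk_eq_zero]
    rw [Submodule.mem_sup] at hdelta_mem
    obtain ⟨a, ha, b, hb, hab⟩ := hdelta_mem
    rw [← hab, map_add]
    have hb0 : Ideal.Quotient.mk J b = 0 := Ideal.Quotient.eq_zero_iff_mem.mpr hb
    rw [hb0, add_zero]
    have hmk : Ideal.Quotient.mk J a = a • (Ideal.Quotient.mk J 1) := by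
      rw [hsmulmk, mul_one]
    rw [hmk, hN]
    exact Submodule.smul_mem_smul ha Submodule.mem_top
  have hWne : W ≠ 0 := by
    intro h0
    rw [hW, Submodule.Quotient.mk_eq_zero] at h0
    have hle : N ≤ Submodule.restrictScalars (MvPolynomial ((i : Fin n) × Fin (r i)) k)
        ((Ideal.ofList P).map (Ideal.Quotient.mk J)) := by
      rw [hN]
      refine Submodule.smul_le.mpr ?_
      intro a ha m _
      obtain ⟨b, rfl⟩ := Ideal.Quotient.mk_surjective (I := J) m
      rw [hsmulmk]
      show Ideal.Quotient.mk J (a * b) ∈ (Ideal.ofList P).map (Ideal.Quotient.mk J)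
      rw [map_mul]
      exact Ideal.mul_mem_right _ _ (Ideal.mem_map_of_mem _ ha)
    have hmem2 : Ideal.Quotient.mk J (w₁ * w₂) ∈ (Ideal.ofList P).map (Ideal.Quotient.mk J) :=
      hle h0
    rw [Ideal.mem_map_iff_of_surjective _ Ideal.Quotient.mk_surjective] at hmem2
    obtain ⟨q, hq, hq2⟩ := hmem2
    have hsub : q - w₁ * w₂ ∈ J := (Ideal.Quotient.mk_eq_mk_iff_sub_mem _ _).mp hq2
    have e1 : MvPolynomial.eval χ q = 0 := by
      have hPle : Ideal.ofList P ≤ RingHom.ker (MvPolynomial.eval χ) :=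
        Ideal.span_le.mpr (fun x hx => hPker x hx)
      exact hPle hq
    have e2 : MvPolynomial.eval χ (q - w₁ * w₂) = 0 := hkerJ hsub
    rw [map_sub, e1, hevalw, zero_sub] at e2
    exact one_ne_zero (neg_eq_zero.mp e2)
  refine hWne (h3 ?_)
  show gv jM • W = gv jM • (0 : _)
  rw [hW0, smul_zero]


lemma boxLabel_val' {n d : ℕ} (hd0 : 0 < d) (i : Fin n) (σ : Finset (Fin n))
    (h : σ.card = d - 1) (hd1 : 1 ≤ d) :
    (boxLabel d hd0 i σ).val = (σ.filter fun s => s < i).card := by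
  unfold boxLabel
  have hle : (σ.filter fun s => s < i).card < d := by
    have := Finset.card_filter_le σ (fun s => s < i)
    omega
  rw [dif_pos hle]

lemma sdiff_filter_card_eq {α : Type*} [DecidableEq α] (σ τ : Finset α)
    (q : α → Prop) [DecidablePred q]
    (h : (σ.filter q).card = (τ.filter q).card) :
    ((σ \ τ).filter q).card = ((τ \ σ).filter q).card := by
  have h1 : ((σ \ τ).filter q).card + ((σ ∩ τ).filter q).card = (σ.filter q).card := by
    rw [← Finset.card_union_of_disjoint
        (Finset.disjoint_filter_filter (Finset.disjoint_sdiff_inter σ τ)),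
      ← Finset.filter_union, Finset.sdiff_union_inter]
  have h2 : ((τ \ σ).filter q).card + ((τ ∩ σ).filter q).card = (τ.filter q).card := by
    rw [← Finset.card_union_of_disjoint
        (Finset.disjoint_filter_filter (Finset.disjoint_sdiff_inter τ σ)),
      ← Finset.filter_union, Finset.sdiff_union_inter]
  rw [Finset.inter_comm] at h2
  omega

/-- From any same-box-label pair on which `p i` differs, extract an *adjacent* such
pair (differing by one same-side swap). -/
lemma exists_adjacent_split {n d : ℕ} {r : Fin n → ℕ}
    (p : (i : Fin n) → Finset (Fin n) → Fin (r i)) (i : Fin n) :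
    ∀ (m : ℕ) (σ τ : Finset (Fin n)), (σ \ τ).card ≤ m →
      σ.card = d - 1 → τ.card = d - 1 → i ∉ σ → i ∉ τ →
      (σ.filter fun s => s < i).card = (τ.filter fun s => s < i).card →
      p i σ ≠ p i τ →
      ∃ (σ' : Finset (Fin n)) (a b : Fin n),
        σ'.card = d - 1 ∧ i ∉ σ' ∧ a ∈ σ' ∧ b ∉ σ' ∧ a ≠ b ∧ b ≠ i ∧ a ≠ i ∧
        (a < i ↔ b < i) ∧ p i σ' ≠ p i (insert b (σ'.erase a)) := by
  intro m
  induction m with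
  | zero =>
    intro σ τ hle hσ hτ _ _ _ hne
    exfalso
    have h0 : σ \ τ = ∅ := Finset.card_eq_zero.mp (Nat.le_zero.mp hle)
    have hsub : σ ⊆ τ := by
      intro x hx
      by_contra hxt
      exact (Finset.notMem_empty x) (h0 ▸ Finset.mem_sdiff.mpr ⟨hx, hxt⟩)
    have heq : σ = τ := Finset.eq_of_subset_of_card_le hsub (le_of_eq (hτ.trans hσ.symm))
    exact hne (by rw [heq])
  | succ m ih =>
    intro σ τ hle hσ hτ hiσ hiτ hfc hne
    have hst : σ ≠ τ := fun h => hne (by rw [h])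
    have hsdne : (σ \ τ).Nonempty := by
      rw [Finset.sdiff_nonempty]
      intro hsub
      exact hst (Finset.eq_of_subset_of_card_le hsub (le_of_eq (hτ.trans hσ.symm)))
    obtain ⟨x, hx⟩ := hsdne
    obtain ⟨hxσ, hxτ⟩ := Finset.mem_sdiff.mp hx
    -- find a matching element on the same side of i
    have hfcneg : (σ.filter fun s => ¬ s < i).card = (τ.filter fun s => ¬ s < i).card := by
      rw [Finset.filter_not, Finset.filter_not,
        Finset.card_sdiff_of_subset (Finset.filter_subset _ _),
        Finset.card_sdiff_of_subset (Finset.filter_subset _ _), hσ, hτ, hfc]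
    have hmatch : ∃ y, y ∈ τ ∧ y ∉ σ ∧ (x < i ↔ y < i) := by
      by_cases hxi : x < i
      · have hc := sdiff_filter_card_eq σ τ (fun s => s < i) hfc
        have hpos : 0 < ((σ \ τ).filter fun s => s < i).card :=
          Finset.card_pos.mpr ⟨x, Finset.mem_filter.mpr ⟨hx, hxi⟩⟩
        obtain ⟨y, hy⟩ := Finset.card_pos.mp (by omega :
          0 < ((τ \ σ).filter fun s => s < i).card)
        obtain ⟨hy1, hy2⟩ := Finset.mem_filter.mp hy
        obtain ⟨hyτ, hyσ⟩ := Finset.mem_sdiff.mp hy1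
        exact ⟨y, hyτ, hyσ, by simp [hxi, hy2]⟩
      · have hc := sdiff_filter_card_eq σ τ (fun s => ¬ s < i) hfcneg
        have hpos : 0 < ((σ \ τ).filter fun s => ¬ s < i).card :=
          Finset.card_pos.mpr ⟨x, Finset.mem_filter.mpr ⟨hx, hxi⟩⟩
        obtain ⟨y, hy⟩ := Finset.card_pos.mp (by omega :
          0 < ((τ \ σ).filter fun s => ¬ s < i).card)
        obtain ⟨hy1, hy2⟩ := Finset.mem_filter.mp hy
        obtain ⟨hyτ, hyσ⟩ := Finset.mem_sdiff.mp hy1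
        exact ⟨y, hyτ, hyσ, by simp [hxi, hy2]⟩
    obtain ⟨y, hyτ, hyσ, hxyiff⟩ := hmatch
    have hyx : y ≠ x := fun h => hyσ (h ▸ hxσ)
    have hyer : y ∉ σ.erase x := fun h => hyσ (Finset.mem_of_mem_erase h)
    have hσpos : 0 < σ.card := Finset.card_pos.mpr ⟨x, hxσ⟩
    set σ₁ := insert y (σ.erase x) with hσ₁
    have hcard1 : σ₁.card = d - 1 := by
      rw [hσ₁, Finset.card_insert_of_notMem hyer, Finset.card_erase_of_mem hxσ]
      omega
    have hiσ₁ : i ∉ σ₁ := by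
      rw [hσ₁]
      intro h
      rcases Finset.mem_insert.mp h with h | h
      · exact hiτ (h ▸ hyτ)
      · exact hiσ (Finset.mem_of_mem_erase h)
    have hfc1 : (σ₁.filter fun s => s < i).card = (τ.filter fun s => s < i).card := by
      rw [← hfc, hσ₁, Finset.filter_insert]
      by_cases hxi : x < i
      · have hyi : y < i := hxyiff.mp hxi
        have hynotf : y ∉ (Finset.filter (fun s => s < i) σ).erase x :=
          fun h => hyσ (Finset.mem_of_mem_filter _ (Finset.mem_of_mem_erase h))
        have hxf : x ∈ Finset.filter (fun s => s < i) σ := Finset.mem_filter.mpr ⟨hxσ, hxi⟩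
        rw [if_pos hyi, Finset.filter_erase, Finset.card_insert_of_notMem hynotf,
          Finset.card_erase_of_mem hxf]
        have : 0 < (σ.filter fun s => s < i).card := Finset.card_pos.mpr ⟨x, hxf⟩
        omega
      · have hyi : ¬ y < i := fun h => hxi (hxyiff.mpr h)
        have hxnot : x ∉ Finset.filter (fun s => s < i) σ :=
          fun h => hxi (Finset.mem_filter.mp h).2
        rw [if_neg hyi, Finset.filter_erase, Finset.erase_eq_of_notMem hxnot]
    by_cases hnew : p i σ = p i σ₁
    · refine ih σ₁ τ ?_ hcard1 hτ hiσ₁ hiτ hfc1 (fun h => hne (hnew.trans h))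
      have hssub : σ₁ \ τ = (σ \ τ).erase x := by
        ext s
        simp only [hσ₁, Finset.mem_sdiff, Finset.mem_insert, Finset.mem_erase]
        constructor
        · rintro ⟨h1 | h1, h2⟩
          · exact absurd (h1 ▸ hyτ) h2
          · exact ⟨h1.1, h1.2, h2⟩
        · rintro ⟨h1, h2, h3⟩
          exact ⟨Or.inr ⟨h1, h2⟩, h3⟩
      rw [hssub, Finset.card_erase_of_mem hx]
      have : 0 < (σ \ τ).card := Finset.card_pos.mpr ⟨x, hx⟩
      omega
    · exact ⟨σ, x, y, hσ, hiσ, hxσ, hyσ, fun h => hyx h.symm,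
        fun h => hiτ (h ▸ hyτ), fun h => hiσ (h ▸ hxσ), hxyiff, hnew⟩

/-- An adjacent same-side split (with `a < b`) implies non-regularity. -/
lemma adj_not_regular {k : Type*} [Field k] {n d : ℕ} {r : Fin n → ℕ}
    {p : (i : Fin n) → Finset (Fin n) → Fin (r i)} (hd : 2 ≤ d)
    (href : ∀ (i : Fin n) (σ τ : Finset (Fin n)), σ.card = d - 1 → i ∉ σ →
      τ.card = d - 1 → i ∉ τ → p i σ = p i τ →
      (σ.filter fun s => s < i).card = (τ.filter fun s => s < i).card)
    (i : Fin n) (σ : Finset (Fin n)) (a b : Fin n)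
    (hσ : σ.card = d - 1) (hiσ : i ∉ σ) (haσ : a ∈ σ) (hbσ : b ∉ σ)
    (hab : a ≠ b) (hbi : b ≠ i) (hai : a ≠ i)
    (hiff : a < i ↔ b < i) (hab2 : a < b)
    (hne : p i σ ≠ p i (insert b (σ.erase a))) :
    ¬ RingTheory.Sequence.IsRegular
      (MvPolynomial ((i : Fin n) × Fin (r i)) k ⧸ detIdeal k d r p) (polDiffs k r) := by
  classical
  have hσpos : 0 < σ.card := Finset.card_pos.mpr ⟨a, haσ⟩
  have hberase : b ∉ σ.erase a := fun h => hbσ (Finset.mem_of_mem_erase h)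
  have hτcard : (insert b (σ.erase a)).card = d - 1 := by
    rw [Finset.card_insert_of_notMem hberase, Finset.card_erase_of_mem haσ]
    omega
  have hiτ : i ∉ insert b (σ.erase a) := by
    intro h
    rcases Finset.mem_insert.mp h with h | h
    · exact hbi h.symm
    · exact hiσ (Finset.mem_of_mem_erase h)
  by_cases hbelow : a < i
  · -- case a < b < i
    have hbi2 : b < i := hiff.mp hbelow
    have hietmp : i ∉ σ.erase a := fun h => hiσ (Finset.mem_of_mem_erase h)
    have hbβ : b ∉ insert i (σ.erase a) := by
      intro h
      rcases Finset.mem_insert.mp h with h | h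
      exacts [hbi h, hberase h]
    have hβcard : (insert i (σ.erase a)).card = d - 1 := by
      rw [Finset.card_insert_of_notMem hietmp, Finset.card_erase_of_mem haσ]
      omega
    have huni : insert i (σ.erase a) ∪ σ = insert i σ := by
      ext s
      simp only [Finset.mem_union, Finset.mem_insert, Finset.mem_erase]
      constructor
      · rintro ((h | ⟨h1, h2⟩) | h)
        exacts [Or.inl h, Or.inr h2, Or.inr h]
      · rintro (h | h)
        · exact Or.inl (Or.inl h)
        · exact Or.inr h
    refine key_not_regular (v := b) (z := i) (β₁ := insert i (σ.erase a)) (β₂ := σ)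
      hbi2 (Finset.mem_insert_self _ _) hiσ hbβ hbσ ?_ ?_ ?_ ?_ ?_
    · -- card of union
      rw [huni, Finset.card_insert_of_notMem hiσ]
      omega
    · rw [Finset.card_insert_of_notMem hbβ, hβcard]
      omega
    · rw [Finset.card_insert_of_notMem hbσ, hσ]
      omega
    · -- split at b
      intro hpeq
      have hcards := href b _ _ hβcard hbβ hσ hbσ hpeq
      have h1 : (Finset.filter (fun s => s < b) (insert i (σ.erase a))).card
          = (Finset.filter (fun s => s < b) (σ.erase a)).card := by
        rw [Finset.filter_insert, if_neg (by exact fun h => absurd (h.trans hbi2) (lt_irrefl _))]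
      have h2 : (Finset.filter (fun s => s < b) σ).card
          = (Finset.filter (fun s => s < b) (σ.erase a)).card + 1 := by
        conv_lhs => rw [← Finset.insert_erase haσ]
        rw [Finset.filter_insert, if_pos hab2, Finset.card_insert_of_notMem
          (fun h => (Finset.mem_erase.mp (Finset.mem_of_mem_filter _ h)).1 rfl)]
      omega
    · -- the mismatch at z = i
      have e1 : (insert i (σ.erase a) ∪ σ).erase i = σ := by
        rw [huni, Finset.erase_insert hiσ]
      have e2 : (insert b (insert i (σ.erase a))).erase i = insert b (σ.erase a) := by
        rw [Finset.insert_comm, Finset.erase_insert]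
        intro h
        rcases Finset.mem_insert.mp h with h | h
        exacts [hbi h.symm, hiσ (Finset.mem_of_mem_erase h)]
      rw [e1, e2]
      exact hne
  · -- case i < a < b
    have hia : i < a := lt_of_le_of_ne (not_lt.mp hbelow) (fun h => hai h.symm)
    have hib : i < b := lt_of_le_of_ne (not_lt.mp (fun h => hbelow (hiff.mpr h)))
      (fun h => hbi h.symm)
    have haτ : a ∉ insert b (σ.erase a) := by
      intro h
      rcases Finset.mem_insert.mp h with h | h
      exacts [hab h, (Finset.mem_erase.mp h).1 rfl]
    have huni : σ ∪ insert b (σ.erase a) = insert b σ := by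
      ext s
      simp only [Finset.mem_union, Finset.mem_insert, Finset.mem_erase]
      constructor
      · rintro (h | (h | ⟨h1, h2⟩))
        exacts [Or.inr h, Or.inl h, Or.inr h2]
      · rintro (h | h)
        exacts [Or.inr (Or.inl h), Or.inl h]
    refine key_not_regular (v := i) (z := a) (β₁ := σ) (β₂ := insert b (σ.erase a))
      hia haσ haτ hiσ hiτ ?_ ?_ ?_ hne ?_
    · rw [huni, Finset.card_insert_of_notMem hbσ]
      omega
    · rw [Finset.card_insert_of_notMem hiσ]
      omega
    · rw [Finset.card_insert_of_notMem hiτ, hτcard]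
      omega
    · -- the mismatch at z = a
      have e1 : (σ ∪ insert b (σ.erase a)).erase a = insert b (σ.erase a) := by
        rw [huni, Finset.erase_insert_of_ne (fun h => hab h.symm)]
      have e2 : (insert i σ).erase a = insert i (σ.erase a) :=
        Finset.erase_insert_of_ne (fun h => hai h.symm)
      rw [e1, e2]
      -- box labels differ: b is above a, i is below a
      intro hpeq
      have hiner : i ∉ σ.erase a := fun h => hiσ (Finset.mem_of_mem_erase h)
      have hc2 : (insert i (σ.erase a)).card = d - 1 := by
        rw [Finset.card_insert_of_notMem hiner, Finset.card_erase_of_mem haσ]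
        omega
      have hanotins : a ∉ insert i (σ.erase a) := by
        intro h
        rcases Finset.mem_insert.mp h with h | h
        exacts [hai h, (Finset.mem_erase.mp h).1 rfl]
      have hcards := href a _ _ hτcard haτ hc2 hanotins hpeq
      have h1 : (Finset.filter (fun s => s < a) (insert b (σ.erase a))).card
          = (Finset.filter (fun s => s < a) (σ.erase a)).card := by
        rw [Finset.filter_insert, if_neg (by exact fun h => absurd (hab2.trans h) (lt_irrefl _))]
      have h2 : (Finset.filter (fun s => s < a) (insert i (σ.erase a))).card
          = (Finset.filter (fun s => s < a) (σ.erase a)).card + 1 := by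
        rw [Finset.filter_insert, if_pos hia, Finset.card_insert_of_notMem
          (fun h => hiner (Finset.mem_of_mem_filter _ h))]
      omega

end Aux
/-- Any partitioning `P'` strictly refining the box partitioning (every part
of `P'` is contained in a part of the box partitioning, and some part of the box partitioning
is properly split) determines an ideal which is not a polarization of `I_d`; hence the box
polarization is a maximal polarization of `I_d`. -/
theorem box_refinement_not_polarization (k : Type*) [Field k] {n d : ℕ}
    (hd : 2 ≤ d) (hdn : d ≤ n - 1)
    (r' : Fin n → ℕ) (p' : (i : Fin n) → Finset (Fin n) → Fin (r' i))
    (hp' : IsPartitioning n d r' p')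
    (hrefines : ∀ (i : Fin n) (σ τ : Finset (Fin n)),
      σ.card = d - 1 → i ∉ σ → τ.card = d - 1 → i ∉ τ →
      p' i σ = p' i τ → boxLabel d (by omega) i σ = boxLabel d (by omega) i τ)
    (hstrict : ∃ (i : Fin n) (σ τ : Finset (Fin n)),
      σ.card = d - 1 ∧ i ∉ σ ∧ τ.card = d - 1 ∧ i ∉ τ ∧
      boxLabel d (by omega) i σ = boxLabel d (by omega) i τ ∧ p' i σ ≠ p' i τ) :
    ¬ IsPolarization r' (sqfPow k n d) (detIdeal k d r' p') := by
  rintro ⟨-, hreg, -⟩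
  obtain ⟨i, σ, τ, hσ, hiσ, hτ, hiτ, hbox, hne⟩ := hstrict
  have hd1 : 1 ≤ d := by omega
  have hfc : (σ.filter fun s => s < i).card = (τ.filter fun s => s < i).card := by
    have hb := congrArg Fin.val hbox
    rwa [boxLabel_val' _ _ _ hσ hd1, boxLabel_val' _ _ _ hτ hd1] at hb
  have href : ∀ (i : Fin n) (σ τ : Finset (Fin n)), σ.card = d - 1 → i ∉ σ →
      τ.card = d - 1 → i ∉ τ → p' i σ = p' i τ →
      (σ.filter fun s => s < i).card = (τ.filter fun s => s < i).card := by
    intro i σ τ h1 h2 h3 h4 h5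
    have hb := congrArg Fin.val (hrefines i σ τ h1 h2 h3 h4 h5)
    rwa [boxLabel_val' _ _ _ h1 hd1, boxLabel_val' _ _ _ h3 hd1] at hb
  obtain ⟨σ', a, b, hσ', hiσ', haσ', hbσ', hab', hbi', hai', hiff', hne'⟩ :=
    exists_adjacent_split p' i (σ \ τ).card σ τ le_rfl hσ hτ hiσ hiτ hfc hne
  rcases lt_or_gt_of_ne hab' with h | h
  · exact adj_not_regular hd href i σ' a b hσ' hiσ' haσ' hbσ' hab' hbi' hai' hiff' h hne' hreg
  · have hberase : b ∉ σ'.erase a := fun hh => hbσ' (Finset.mem_of_mem_erase hh)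
    have hswap : insert a ((insert b (σ'.erase a)).erase b) = σ' := by
      rw [Finset.erase_insert hberase, Finset.insert_erase haσ']
    have hτc : (insert b (σ'.erase a)).card = d - 1 := by
      rw [Finset.card_insert_of_notMem hberase, Finset.card_erase_of_mem haσ']
      have : 0 < σ'.card := Finset.card_pos.mpr ⟨a, haσ'⟩
      omega
    have hiτ' : i ∉ insert b (σ'.erase a) := by
      intro hh
      rcases Finset.mem_insert.mp hh with hh | hh
      exacts [hbi' hh.symm, hiσ' (Finset.mem_of_mem_erase hh)]
    have hanotτ : a ∉ insert b (σ'.erase a) := by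
      intro hh
      rcases Finset.mem_insert.mp hh with hh | hh
      exacts [hab' hh, (Finset.mem_erase.mp hh).1 rfl]
    refine adj_not_regular hd href i (insert b (σ'.erase a)) b a hτc hiτ'
      (Finset.mem_insert_self _ _) hanotτ (Ne.symm hab') hai' hbi' hiff'.symm h ?_ hreg
    rw [hswap]
    exact Ne.symm hne'
end

section
/- Let 2 ≤ d ≤ n−1, fix an index i, and let P be the partitioning in which each part of Σ_i^d is a singleton and Σ_{i′}^d = P_{i′,1} is a single part for every i′ ≠ i. If P′ is any partitioning of the sets Σ_j^d that strictly refines P, then the ideal determined by P′ is not a polarization of I_d. Consequently the polarization determined by P is a maximal polarization of I_d. -/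
open MvPolynomial

lemma mem_smul_top_iff_q {R : Type*} [CommRing R] (J T : Ideal R) (z : R) :
    Ideal.Quotient.mk J z ∈ (T • ⊤ : Submodule R (R ⧸ J)) ↔ z ∈ T ⊔ J := by
  rw [Ideal.smul_top_eq_map, Submodule.restrictScalars_mem, Ideal.Quotient.algebraMap_eq,
    Ideal.mem_quotient_iff_mem_sup]


lemma prod_sub_prod_mem {R ι : Type*} [CommRing R] (T : Ideal R) (Q : Finset ι) (a b : ι → R)
    (h : ∀ c ∈ Q, a c - b c ∈ T) : (∏ c ∈ Q, a c) - (∏ c ∈ Q, b c) ∈ T := by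
  classical
  induction Q using Finset.induction_on with
  | empty => simpa using T.zero_mem
  | @insert x Q hx ih =>
    rw [Finset.prod_insert hx, Finset.prod_insert hx]
    have h1 : a x * ∏ c ∈ Q, a c - b x * ∏ c ∈ Q, b c
        = a x * ((∏ c ∈ Q, a c) - ∏ c ∈ Q, b c) + (a x - b x) * ∏ c ∈ Q, b c := by ring
    rw [h1]
    exact T.add_mem (Ideal.mul_mem_left _ _ (ih fun c hc => h c (Finset.mem_insert_of_mem hc)))
      (Ideal.mul_mem_right _ _ (h x (Finset.mem_insert_self x Q)))

lemma prod_X_eq_monomial'' {K V ι : Type*} [CommSemiring K] (Q : Finset ι) (v : ι → V) :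
    (∏ c ∈ Q, (X (v c) : MvPolynomial V K))
      = monomial (∑ c ∈ Q, Finsupp.single (v c) 1) 1 := by
  classical
  induction Q using Finset.induction_on with
  | empty => simp
  | @insert x Q hx ih =>
    rw [Finset.prod_insert hx, Finset.sum_insert hx, ih, X, monomial_mul, one_mul]

lemma sum_single_apply_ne_zero {V ι : Type*} [DecidableEq V] (Q : Finset ι) (v : ι → V)
    {w : V} (h : (∑ c ∈ Q, Finsupp.single (v c) 1 : V →₀ ℕ) w ≠ 0) : ∃ c ∈ Q, v c = w := by
  rw [Finsupp.finset_sum_apply] at h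
  obtain ⟨c, hc, hne⟩ := Finset.exists_ne_zero_of_sum_ne_zero h
  refine ⟨c, hc, ?_⟩
  by_contra hne'
  exact hne (Finsupp.single_eq_of_ne (Ne.symm hne'))


def clsv {n : ℕ} (r' : Fin n → ℕ) (s : Fin n) (t : ℕ) (v : (i : Fin n) × Fin (r' i)) :
    (i : Fin n) × Fin (r' i) :=
  if v.1.val < s.val ∨ (v.1 = s ∧ v.2.val < t) then
    ⟨v.1, ⟨0, Nat.lt_of_le_of_lt (Nat.zero_le _) v.2.isLt⟩⟩ else v

lemma clsv_fst {n : ℕ} (r' : Fin n → ℕ) (s : Fin n) (t : ℕ) (v : (i : Fin n) × Fin (r' i)) :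
    (clsv r' s t v).1 = v.1 := by
  unfold clsv; split_ifs <;> rfl

lemma clsv_idem {n : ℕ} (r' : Fin n → ℕ) (s : Fin n) (t : ℕ) (ht0 : 0 < t)
    (v : (i : Fin n) × Fin (r' i)) :
    clsv r' s t (clsv r' s t v) = clsv r' s t v := by
  by_cases h : v.1.val < s.val ∨ (v.1 = s ∧ v.2.val < t)
  · have h1 : clsv r' s t v = ⟨v.1, ⟨0, Nat.lt_of_le_of_lt (Nat.zero_le _) v.2.isLt⟩⟩ := if_pos h
    rw [h1]
    unfold clsv
    rw [if_pos (by rcases h with h | ⟨h, _⟩; exacts [Or.inl h, Or.inr ⟨h, ht0⟩])]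
  · have h1 : clsv r' s t v = v := if_neg h
    rw [h1]; exact h1

lemma clsv_of_gt {n : ℕ} (r' : Fin n → ℕ) (s : Fin n) (t : ℕ) (v : (i : Fin n) × Fin (r' i))
    (h : s.val < v.1.val) : clsv r' s t v = v := by
  unfold clsv
  rw [if_neg]
  rintro (h1 | ⟨h1, _⟩)
  · omega
  · rw [h1] at h; omega

noncomputable def diffOf {k : Type*} [Field k] {n : ℕ} (r' : Fin n → ℕ) (c : Fin n) (j : Fin (r' c)) :
    MvPolynomial ((i : Fin n) × Fin (r' i)) k :=
  X ⟨c, ⟨0, Nat.lt_of_le_of_lt (Nat.zero_le _) j.isLt⟩⟩ - X ⟨c, j⟩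

lemma polDiffs_eq_flatMap (k : Type*) [Field k] {n : ℕ} (r' : Fin n → ℕ) :
    polDiffs k r' = (List.finRange n).flatMap fun i =>
      (((List.finRange (r' i)).filter fun j => 0 < j.val).map fun j => diffOf r' i j) := rfl

lemma polDiffs_split (k : Type*) [Field k] {n : ℕ} (r' : Fin n → ℕ) (s : Fin n) (t : ℕ)
    (ht0 : 0 < t) (ht : t < r' s) :
    ∃ AL BL : List (MvPolynomial ((i : Fin n) × Fin (r' i)) k),
      polDiffs k r' = AL ++ (diffOf r' s ⟨t, ht⟩) :: BL ∧
      (∀ x ∈ AL, ∃ (c : Fin n) (j : Fin (r' c)), 0 < j.val ∧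
        (c.val < s.val ∨ (c = s ∧ j.val < t)) ∧ x = diffOf r' c j) ∧
      (∀ (c : Fin n) (j : Fin (r' c)), 0 < j.val →
        (c.val < s.val ∨ (c = s ∧ j.val < t)) → diffOf r' c j ∈ AL) := by
  classical
  set inner : Fin n → List (MvPolynomial ((i : Fin n) × Fin (r' i)) k) := fun i =>
    (((List.finRange (r' i)).filter fun j => 0 < j.val).map fun j => diffOf r' i j) with hinner
  have hinner_mem : ∀ (c : Fin n) (x), x ∈ inner c →
      ∃ j : Fin (r' c), 0 < j.val ∧ x = diffOf r' c j := by
    intro c x hx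
    rw [hinner, List.mem_map] at hx
    obtain ⟨j, hj, rfl⟩ := hx
    rw [List.mem_filter] at hj
    exact ⟨j, by simpa using hj.2, rfl⟩
  have hinner_mem' : ∀ (c : Fin n) (j : Fin (r' c)), 0 < j.val → diffOf (k := k) r' c j ∈ inner c := by
    intro c j hj
    rw [hinner]
    exact List.mem_map_of_mem (List.mem_filter.mpr ⟨List.mem_finRange j, by simpa using hj⟩)
  have hsn : s.val < (List.finRange n).length := by simpa using s.isLt
  set T1 := (List.finRange n).take s.val with hT1
  set T2 := (List.finRange n).drop (s.val + 1) with hT2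
  have hgs : (List.finRange n)[s.val] = s := Fin.ext (by simp)
  have hsplit1 : List.finRange n = T1 ++ s :: T2 := by
    conv_lhs => rw [← List.take_append_drop s.val (List.finRange n)]
    rw [List.drop_eq_getElem_cons hsn, hgs]
  have hT1len : T1.length = s.val := by
    rw [hT1, List.length_take, List.length_finRange]; omega
  have hT1mem : ∀ c ∈ T1, c.val < s.val := by
    intro c hc
    obtain ⟨i, hi, hci⟩ := List.mem_iff_getElem.mp hc
    have h2 : T1[i] = (List.finRange n)[i]'(by rw [List.length_finRange]; have := s.isLt; omega) := List.getElem_take ..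
    have h3 : c.val = i := by
      rw [← hci, h2]
      simp [List.getElem_finRange]
    omega
  have hT1mem' : ∀ c : Fin n, c.val < s.val → c ∈ T1 := by
    intro c hc
    rw [List.mem_iff_getElem]
    refine ⟨c.val, by omega, ?_⟩
    have h2 : T1[c.val]'(by omega) = (List.finRange n)[c.val]'(by rw [List.length_finRange]; have := s.isLt; omega) :=
      List.getElem_take ..
    exact Fin.ext (by rw [h2]; simp [List.getElem_finRange])
  -- split the filtered list for s
  set F := (List.finRange (r' s)).filter (fun j => 0 < j.val) with hF
  have hrs0 : 0 < r' s := lt_trans ht0 ht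
  have h0 : (0:ℕ) < (List.finRange (r' s)).length := by simpa using hrs0
  have hcons : List.finRange (r' s)
      = (List.finRange (r' s))[0] :: List.drop 1 (List.finRange (r' s)) := by
    conv_lhs => rw [← List.drop_zero (l := List.finRange (r' s))]
    rw [List.drop_eq_getElem_cons h0]
  have hFdrop : F = (List.finRange (r' s)).drop 1 := by
    rw [hF]
    conv_lhs => rw [hcons]
    rw [List.filter_cons]
    have hdec : (decide (0 < ((List.finRange (r' s))[0]).val)) = false := by
      simp [List.getElem_finRange]
    rw [hdec]
    simp only [Bool.false_eq_true, if_false]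
    apply List.filter_eq_self.mpr
    intro a ha
    obtain ⟨i, hi, hai⟩ := List.mem_iff_getElem.mp ha
    have h4 : a.val = i + 1 := by
      rw [← hai]
      simp [List.getElem_drop, List.getElem_finRange]
    simp [h4]
  have hFlen : F.length = r' s - 1 := by rw [hFdrop]; simp
  have hFget : ∀ (i : ℕ) (hi : i < F.length), F[i] = ⟨1 + i, by omega⟩ := by
    intro i hi
    apply Fin.ext
    rw [List.getElem_of_eq hFdrop hi]
    simp [List.getElem_drop, List.getElem_finRange]
    omega
  have htF : t - 1 < F.length := by omega
  have hFsplit : F = F.take (t-1) ++ (⟨t, ht⟩ : Fin (r' s)) :: F.drop t := by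
    conv_lhs => rw [← List.take_append_drop (t-1) F]
    rw [List.drop_eq_getElem_cons htF, hFget _ htF]
    have e1 : (⟨1 + (t-1), by omega⟩ : Fin (r' s)) = ⟨t, ht⟩ := Fin.ext (by simp; omega)
    have e2 : t - 1 + 1 = t := by omega
    rw [e1, e2]
  have hFtake_mem : ∀ x ∈ F.take (t-1), 0 < x.val ∧ x.val < t := by
    intro x hx
    obtain ⟨i, hi, hxi⟩ := List.mem_iff_getElem.mp hx
    have hilen : i < F.length := by
      rw [List.length_take] at hi; omega
    have h2 : (F.take (t-1))[i] = F[i]'hilen := List.getElem_take ..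
    have h3 : x.val = 1 + i := by
      rw [← hxi, h2, hFget _ hilen]
    rw [List.length_take] at hi
    omega
  have hFtake_mem' : ∀ j : Fin (r' s), 0 < j.val → j.val < t → j ∈ F.take (t-1) := by
    intro j hj0 hjt
    rw [List.mem_iff_getElem]
    have hlen : (F.take (t-1)).length = t - 1 := by
      rw [List.length_take]; omega
    refine ⟨j.val - 1, by omega, ?_⟩
    have hjF : j.val - 1 < F.length := by omega
    have h2 : (F.take (t-1))[j.val-1]'(by omega) = F[j.val-1]'hjF := List.getElem_take ..
    rw [h2, hFget _ hjF]
    exact Fin.ext (by simp; omega)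
  -- assemble
  refine ⟨T1.flatMap inner ++ (F.take (t-1)).map (fun j => diffOf r' s j),
    (F.drop t).map (fun j => diffOf r' s j) ++ T2.flatMap inner, ?_, ?_, ?_⟩
  · rw [polDiffs_eq_flatMap, ← hinner, hsplit1, List.flatMap_append, List.flatMap_cons]
    have hmid : inner s = (F.take (t-1)).map (fun j => diffOf r' s j) ++
        (diffOf r' s ⟨t, ht⟩) :: (F.drop t).map (fun j => diffOf r' s j) := by
      rw [hinner]
      show (F.map fun j => diffOf r' s j) = _
      conv_lhs => rw [hFsplit]
      rw [List.map_append, List.map_cons]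
    rw [hmid]
    simp [List.append_assoc]
  · intro x hx
    rw [List.mem_append] at hx
    rcases hx with hx | hx
    · rw [List.mem_flatMap] at hx
      obtain ⟨c, hc, hxc⟩ := hx
      obtain ⟨j, hj, rfl⟩ := hinner_mem c x hxc
      exact ⟨c, j, hj, Or.inl (hT1mem c hc), rfl⟩
    · rw [List.mem_map] at hx
      obtain ⟨j, hj, rfl⟩ := hx
      obtain ⟨hj0, hjt⟩ := hFtake_mem j hj
      exact ⟨s, j, hj0, Or.inr ⟨rfl, hjt⟩, rfl⟩
  · intro c j hj0 hcs
    rw [List.mem_append]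
    rcases hcs with hcs | ⟨rfl, hjt⟩
    · exact Or.inl (List.mem_flatMap.mpr ⟨c, hT1mem' c hcs, hinner_mem' c j hj0⟩)
    · exact Or.inr (List.mem_map_of_mem (hFtake_mem' j hj0 hjt))

lemma witness_not_regular (k : Type*) [Field k] {n d : ℕ} (hd1 : 1 ≤ d)
    (r' : Fin n → ℕ) (p' : (i : Fin n) → Finset (Fin n) → Fin (r' i))
    (s : Fin n) (A B : Finset (Fin n)) (e : Fin n)
    (hAcard : A.card = d) (hBcard : B.card = d)
    (hsA : s ∈ A) (hsB : s ∈ B)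
    (hABcard : (A ∩ B).card = d - 1)
    (t : ℕ) (ht0 : 0 < t) (ht : t < r' s)
    (hα : (p' s (A.erase s)).val < t)
    (hβ : (p' s (B.erase s)).val = t)
    (he : e ∈ (A ∪ B).erase s)
    (heA : e ∈ A →
      clsv r' s t ⟨e, p' e (((A ∪ B).erase s).erase e)⟩ ≠ clsv r' s t ⟨e, p' e (A.erase e)⟩)
    (heB : e ∈ B →
      clsv r' s t ⟨e, p' e (((A ∪ B).erase s).erase e)⟩ ≠ clsv r' s t ⟨e, p' e (B.erase e)⟩) :
    ¬ RingTheory.Sequence.IsRegular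
      (MvPolynomial ((i : Fin n) × Fin (r' i)) k ⧸ detIdeal k d r' p') (polDiffs k r') := by
  classical
  intro hreg
  obtain ⟨AL, BL, hLsplit, hALmem, hALmem'⟩ := polDiffs_split k r' s t ht0 ht
  set J := detIdeal k d r' p' with hJdef
  set T : Ideal (MvPolynomial ((i : Fin n) × Fin (r' i)) k) := Ideal.ofList AL with hTdef
  have hzero : 0 < r' s := lt_trans ht0 ht
  -- T contains all class differences
  have hdiffT : ∀ v : (i : Fin n) × Fin (r' i),
      (X (clsv r' s t v) - X v : MvPolynomial ((i : Fin n) × Fin (r' i)) k) ∈ T := by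
    intro v
    by_cases hc : v.1.val < s.val ∨ (v.1 = s ∧ v.2.val < t)
    · have h1 : clsv r' s t v = ⟨v.1, ⟨0, Nat.lt_of_le_of_lt (Nat.zero_le _) v.2.isLt⟩⟩ :=
        if_pos hc
      rw [h1]
      by_cases hv0 : v.2.val = 0
      · have : v = ⟨v.1, ⟨0, Nat.lt_of_le_of_lt (Nat.zero_le _) v.2.isLt⟩⟩ := by
          cases v with
          | mk a b => exact congrArg _ (Fin.ext hv0)
        rw [← this]
        simpa using T.zero_mem
      · have hmem : diffOf (k := k) r' v.1 v.2 ∈ AL := hALmem' v.1 v.2 (by omega) hc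
        have : (X (⟨v.1, ⟨0, Nat.lt_of_le_of_lt (Nat.zero_le _) v.2.isLt⟩⟩ :
            (i : Fin n) × Fin (r' i)) - X v : MvPolynomial ((i : Fin n) × Fin (r' i)) k)
            = diffOf r' v.1 v.2 := rfl
        rw [this, hTdef]
        exact Ideal.subset_span hmem
    · have h1 : clsv r' s t v = v := if_neg hc
      rw [h1]
      simpa using T.zero_mem
  -- rename by clsv of a product of variables
  have hren : ∀ (γ : Finset (Fin n)) (w : Fin n → (i : Fin n) × Fin (r' i)),
      (rename (clsv r' s t) : MvPolynomial ((i : Fin n) × Fin (r' i)) k →ₐ[k] _)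
        (∏ c ∈ γ, X (w c)) = ∏ c ∈ γ, X (clsv r' s t (w c)) := by
    intro γ w
    rw [map_prod]
    simp [rename_X]
  have hκsub : ∀ (γ : Finset (Fin n)) (w : Fin n → (i : Fin n) × Fin (r' i)),
      (∏ c ∈ γ, X (clsv r' s t (w c))) - (∏ c ∈ γ, (X (w c) :
        MvPolynomial ((i : Fin n) × Fin (r' i)) k)) ∈ T := by
    intro γ w
    exact prod_sub_prod_mem T γ _ _ fun c _ => hdiffT (w c)
  -- generators of J
  have hgen : ∀ γ : Finset (Fin n), γ.card = d →
      (∏ c ∈ γ, X (⟨c, p' c (γ.erase c)⟩ : (i : Fin n) × Fin (r' i)) :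
        MvPolynomial ((i : Fin n) × Fin (r' i)) k) ∈ J := by
    intro γ hγ
    rw [hJdef]
    exact Ideal.subset_span ⟨γ, hγ, rfl⟩
  -- the witness monomial
  set fA : MvPolynomial ((i : Fin n) × Fin (r' i)) k :=
    ∏ c ∈ A.erase s, X (clsv r' s t ⟨c, p' c (A.erase c)⟩) with hfAdef
  set fB : MvPolynomial ((i : Fin n) × Fin (r' i)) k :=
    ∏ c ∈ B.erase s, X (clsv r' s t ⟨c, p' c (B.erase c)⟩) with hfBdef
  set f := fA * fB with hfdef
  set mA : MvPolynomial ((i : Fin n) × Fin (r' i)) k :=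
    ∏ c ∈ A, X ⟨c, p' c (A.erase c)⟩ with hmAdef
  set mB : MvPolynomial ((i : Fin n) × Fin (r' i)) k :=
    ∏ c ∈ B, X ⟨c, p' c (B.erase c)⟩ with hmBdef
  set D : MvPolynomial ((i : Fin n) × Fin (r' i)) k :=
    X ⟨s, ⟨0, hzero⟩⟩ - X ⟨s, ⟨t, ht⟩⟩ with hDdef
  have hDdiff : D = diffOf r' s ⟨t, ht⟩ := rfl
  -- factorizations
  have hclsA : clsv r' s t ⟨s, p' s (A.erase s)⟩ = ⟨s, ⟨0, hzero⟩⟩ := by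
    unfold clsv
    exact if_pos (Or.inr ⟨rfl, hα⟩)
  have hclsB : clsv r' s t ⟨s, p' s (B.erase s)⟩ = ⟨s, ⟨t, ht⟩⟩ := by
    have h1 : clsv r' s t ⟨s, p' s (B.erase s)⟩ = ⟨s, p' s (B.erase s)⟩ := by
      unfold clsv
      apply if_neg
      rintro (h | ⟨-, h⟩)
      · simp at h
      · dsimp only at h; omega
    rw [h1]
    exact congrArg _ (Fin.ext hβ)
  have hfactA : (rename (clsv r' s t) : MvPolynomial ((i : Fin n) × Fin (r' i)) k →ₐ[k] _) mA
      = X ⟨s, ⟨0, hzero⟩⟩ * fA := by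
    rw [hmAdef, hren A _, ← Finset.mul_prod_erase A _ hsA, hclsA, hfAdef]
  have hfactB : (rename (clsv r' s t) : MvPolynomial ((i : Fin n) × Fin (r' i)) k →ₐ[k] _) mB
      = X ⟨s, ⟨t, ht⟩⟩ * fB := by
    rw [hmBdef, hren B _, ← Finset.mul_prod_erase B _ hsB, hclsB, hfBdef]
  -- D * f ∈ T ⊔ J
  have hDf : D * f ∈ T ⊔ J := by
    have key : D * f = ((rename (clsv r' s t) : MvPolynomial ((i : Fin n) × Fin (r' i)) k →ₐ[k] _) mA - mA) * fB
        - ((rename (clsv r' s t) : MvPolynomial ((i : Fin n) × Fin (r' i)) k →ₐ[k] _) mB - mB) * fA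
        + (mA * fB - mB * fA) := by
      rw [hfactA, hfactB, hDdef, hfdef]
      ring
    rw [key]
    refine Submodule.add_mem _ (Submodule.sub_mem _ ?_ ?_) (Submodule.mem_sup_right ?_)
    · refine Submodule.mem_sup_left (Ideal.mul_mem_right _ _ ?_)
      rw [hmAdef, hren A _]
      exact hκsub A _
    · refine Submodule.mem_sup_left (Ideal.mul_mem_right _ _ ?_)
      rw [hmBdef, hren B _]
      exact hκsub B _
    · exact Submodule.sub_mem _ (Ideal.mul_mem_right _ _ (hgen A hAcard))
        (Ideal.mul_mem_right _ _ (hgen B hBcard))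
  -- f ∉ T ⊔ J
  have hfnot : f ∉ T ⊔ J := by
    intro hf
    set SK : Set (((i : Fin n) × Fin (r' i)) →₀ ℕ) :=
      {E | ∃ γ : Finset (Fin n), γ.card = d ∧
        E = ∑ c ∈ γ, Finsupp.single (clsv r' s t ⟨c, p' c (γ.erase c)⟩) 1} with hSK
    set K : Ideal (MvPolynomial ((i : Fin n) × Fin (r' i)) k) :=
      Ideal.span ((fun E => monomial E (1:k)) '' SK) with hK
    have hle : T ⊔ J ≤ Ideal.comap (rename (clsv r' s t) :
        MvPolynomial ((i : Fin n) × Fin (r' i)) k →ₐ[k] _) K := by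
      refine sup_le ?_ ?_
      · rw [hTdef, Ideal.span_le]
        intro x hx
        obtain ⟨c, j, hj0, hcs, rfl⟩ := hALmem x hx
        have h1 : clsv r' s t ⟨c, ⟨0, Nat.lt_of_le_of_lt (Nat.zero_le _) j.isLt⟩⟩
            = ⟨c, ⟨0, Nat.lt_of_le_of_lt (Nat.zero_le _) j.isLt⟩⟩ := by
          unfold clsv
          apply if_pos
          rcases hcs with h | ⟨h, _⟩
          · exact Or.inl h
          · exact Or.inr ⟨h, ht0⟩
        have h2 : clsv r' s t ⟨c, j⟩ = ⟨c, ⟨0, Nat.lt_of_le_of_lt (Nat.zero_le _) j.isLt⟩⟩ := by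
          unfold clsv
          apply if_pos
          rcases hcs with h | ⟨h, h'⟩
          · exact Or.inl h
          · exact Or.inr ⟨h, h'⟩
        simp only [SetLike.mem_coe, Ideal.mem_comap]
        have : (rename (clsv r' s t) : MvPolynomial ((i : Fin n) × Fin (r' i)) k →ₐ[k] _)
            (diffOf r' c j) = 0 := by
          unfold diffOf
          rw [map_sub, rename_X, rename_X, h1, h2, sub_self]
        rw [this]
        exact K.zero_mem
      · rw [hJdef, detIdeal, Ideal.span_le]
        rintro x ⟨γ, hγ, rfl⟩
        simp only [SetLike.mem_coe, Ideal.mem_comap]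
        rw [hren γ _, prod_X_eq_monomial'']
        exact Ideal.subset_span ⟨_, ⟨γ, hγ, rfl⟩, rfl⟩
    have hκf : (rename (clsv r' s t) : MvPolynomial ((i : Fin n) × Fin (r' i)) k →ₐ[k] _) f
        = f := by
      rw [hfdef, map_mul, hfAdef, hfBdef, hren _ _, hren _ _]
      simp only [clsv_idem r' s t ht0]
    have hfK : f ∈ K := by
      rw [← hκf]
      exact Ideal.mem_comap.mp (hle hf)
    set EA := ∑ c ∈ A.erase s, Finsupp.single (clsv r' s t ⟨c, p' c (A.erase c)⟩) (1:ℕ)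
      with hEA
    set EB := ∑ c ∈ B.erase s, Finsupp.single (clsv r' s t ⟨c, p' c (B.erase c)⟩) (1:ℕ)
      with hEB
    have hfmono : f = monomial (EA + EB) (1:k) := by
      rw [hfdef, hfAdef, hfBdef, prod_X_eq_monomial'', prod_X_eq_monomial'', monomial_mul,
        one_mul, hEA, hEB]
    rw [hfmono, hK, mem_ideal_span_monomial_image] at hfK
    have hsupp : (EA + EB) ∈ (monomial (EA+EB) (1:k)).support := by
      rw [support_monomial, if_neg (one_ne_zero)]
      exact Finset.mem_singleton_self _
    obtain ⟨E, hESK, hEle⟩ := hfK _ hsupp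
    obtain ⟨γ, hγcard, rfl⟩ := hESK
    set S := (A ∪ B).erase s with hS
    have hScard : S.card = d := by
      have h1 := Finset.card_union_add_card_inter A B
      rw [hAcard, hBcard, hABcard] at h1
      rw [hS, Finset.card_erase_of_mem (Finset.mem_union_left B hsA)]
      omega
    -- each index of γ contributes a nonzero entry dominated by EA + EB
    have hdom : ∀ c ∈ γ, (EA + EB) (clsv r' s t ⟨c, p' c (γ.erase c)⟩) ≠ 0 := by
      intro c hc
      have h1 : (∑ c' ∈ γ, Finsupp.single (clsv r' s t ⟨c', p' c' (γ.erase c')⟩) (1:ℕ))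
          (clsv r' s t ⟨c, p' c (γ.erase c)⟩) ≠ 0 := by
        rw [Finsupp.finset_sum_apply]
        intro h0
        rw [Finset.sum_eq_zero_iff] at h0
        have := h0 c hc
        rw [Finsupp.single_eq_same] at this
        exact one_ne_zero this
      have h2 := hEle (clsv r' s t ⟨c, p' c (γ.erase c)⟩)
      intro h0
      rw [h0] at h2
      omega
    have hmemAB : ∀ c ∈ γ, ∀ (v : (i : Fin n) × Fin (r' i)),
        v = clsv r' s t ⟨c, p' c (γ.erase c)⟩ → (EA + EB) v ≠ 0 →
        (c ∈ A.erase s ∧ clsv r' s t ⟨c, p' c (A.erase c)⟩ = v) ∨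
        (c ∈ B.erase s ∧ clsv r' s t ⟨c, p' c (B.erase c)⟩ = v) := by
      intro c hc v hv hne
      rw [Finsupp.add_apply] at hne
      have hcase : EA v ≠ 0 ∨ EB v ≠ 0 := by
        by_contra hcon
        push_neg at hcon
        omega
      rcases hcase with h | h
      · rw [hEA] at h
        obtain ⟨c', hc', hc'eq⟩ := sum_single_apply_ne_zero _ _ h
        have hfst : c' = c := by
          have h9 := congrArg Sigma.fst hc'eq
          rw [clsv_fst, hv, clsv_fst] at h9
          exact h9
        rw [hfst] at hc' hc'eq
        exact Or.inl ⟨hc', hc'eq⟩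
      · rw [hEB] at h
        obtain ⟨c', hc', hc'eq⟩ := sum_single_apply_ne_zero _ _ h
        have hfst : c' = c := by
          have h9 := congrArg Sigma.fst hc'eq
          rw [clsv_fst, hv, clsv_fst] at h9
          exact h9
        rw [hfst] at hc' hc'eq
        exact Or.inr ⟨hc', hc'eq⟩
    have hsub : γ ⊆ S := by
      intro c hc
      rcases hmemAB c hc _ rfl (hdom c hc) with ⟨hcA, -⟩ | ⟨hcB, -⟩
      · rw [hS]
        rw [Finset.mem_erase] at hcA ⊢
        exact ⟨hcA.1, Finset.mem_union_left B hcA.2⟩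
      · rw [hS]
        rw [Finset.mem_erase] at hcB ⊢
        exact ⟨hcB.1, Finset.mem_union_right A hcB.2⟩
    have hγS : γ = S := Finset.eq_of_subset_of_card_le hsub (by rw [hScard, hγcard])
    have heγ : e ∈ γ := by rw [hγS, hS]; exact he
    rcases hmemAB e heγ _ rfl (hdom e heγ) with ⟨hcA, hcEq⟩ | ⟨hcB, hcEq⟩
    · refine heA (Finset.mem_of_mem_erase hcA) ?_
      rw [← hγS]
      exact hcEq.symm
    · refine heB (Finset.mem_of_mem_erase hcB) ?_
      rw [← hγS]
      exact hcEq.symm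
  -- conclude: extract smul-regularity at the step and contradict
  rw [hLsplit] at hreg
  have hw := hreg.toIsWeaklyRegular
  rw [RingTheory.Sequence.isWeaklyRegular_append_iff] at hw
  have hw2 := hw.2
  rw [RingTheory.Sequence.isWeaklyRegular_cons_iff] at hw2
  have hD := hw2.1
  have hsmul : (diffOf (k := k) r' s ⟨t, ht⟩) • (Ideal.Quotient.mk J f)
      = Ideal.Quotient.mk J (diffOf r' s ⟨t, ht⟩ * f) := rfl
  have hmem1 : Ideal.Quotient.mk J (diffOf r' s ⟨t, ht⟩ * f) ∈
      (Ideal.ofList AL • ⊤ : Submodule (MvPolynomial ((i : Fin n) × Fin (r' i)) k)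
        (MvPolynomial ((i : Fin n) × Fin (r' i)) k ⧸ J)) := by
    rw [mem_smul_top_iff_q]
    rw [← hTdef, ← hDdiff]
    exact hDf
  have hx0 : (diffOf (k := k) r' s ⟨t, ht⟩) •
      (Submodule.Quotient.mk (Ideal.Quotient.mk J f) :
        (MvPolynomial ((i : Fin n) × Fin (r' i)) k ⧸ J) ⧸
          (Ideal.ofList AL • ⊤ : Submodule (MvPolynomial ((i : Fin n) × Fin (r' i)) k)
            (MvPolynomial ((i : Fin n) × Fin (r' i)) k ⧸ J)))
      = (diffOf (k := k) r' s ⟨t, ht⟩) • (0 : _) := by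
    rw [smul_zero, ← Submodule.Quotient.mk_smul, Submodule.Quotient.mk_eq_zero]
    show (diffOf (k := k) r' s ⟨t, ht⟩) • (Ideal.Quotient.mk J f) ∈ _
    rw [hsmul]
    exact hmem1
  have hx := hD hx0
  rw [Submodule.Quotient.mk_eq_zero, mem_smul_top_iff_q, ← hTdef] at hx
  exact hfnot hx

lemma sigma_mk_ne {n : ℕ} {r' : Fin n → ℕ} (c : Fin n) (x y : Fin (r' c)) (h : x ≠ y) :
    (⟨c, x⟩ : (i : Fin n) × Fin (r' i)) ≠ ⟨c, y⟩ := by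
  simp [h]

lemma witness_not_regular' (k : Type*) [Field k] {n d : ℕ} (hd1 : 1 ≤ d)
    (r' : Fin n → ℕ) (p' : (i : Fin n) → Finset (Fin n) → Fin (r' i))
    (s : Fin n) (A B : Finset (Fin n)) (e : Fin n)
    (hAcard : A.card = d) (hBcard : B.card = d)
    (hsA : s ∈ A) (hsB : s ∈ B)
    (hABcard : (A ∩ B).card = d - 1)
    (hne : p' s (A.erase s) ≠ p' s (B.erase s))
    (he : e ∈ (A ∪ B).erase s)
    (heA : e ∈ A →
      clsv r' s ((p' s (B.erase s)).val) ⟨e, p' e (((A ∪ B).erase s).erase e)⟩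
        ≠ clsv r' s ((p' s (B.erase s)).val) ⟨e, p' e (A.erase e)⟩)
    (heB : e ∈ B →
      clsv r' s ((p' s (B.erase s)).val) ⟨e, p' e (((A ∪ B).erase s).erase e)⟩
        ≠ clsv r' s ((p' s (B.erase s)).val) ⟨e, p' e (B.erase e)⟩)
    (heA' : e ∈ A →
      clsv r' s ((p' s (A.erase s)).val) ⟨e, p' e (((A ∪ B).erase s).erase e)⟩
        ≠ clsv r' s ((p' s (A.erase s)).val) ⟨e, p' e (A.erase e)⟩)
    (heB' : e ∈ B →
      clsv r' s ((p' s (A.erase s)).val) ⟨e, p' e (((A ∪ B).erase s).erase e)⟩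
        ≠ clsv r' s ((p' s (A.erase s)).val) ⟨e, p' e (B.erase e)⟩) :
    ¬ RingTheory.Sequence.IsRegular
      (MvPolynomial ((i : Fin n) × Fin (r' i)) k ⧸ detIdeal k d r' p') (polDiffs k r') := by
  have hvne : (p' s (A.erase s)).val ≠ (p' s (B.erase s)).val := fun h => hne (Fin.ext h)
  rcases lt_or_gt_of_ne hvne with h | h
  · exact witness_not_regular k hd1 r' p' s A B e hAcard hBcard hsA hsB hABcard
      ((p' s (B.erase s)).val) (by omega) (p' s (B.erase s)).isLt h rfl he heA heB
  · have hBA : B ∪ A = A ∪ B := Finset.union_comm B A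
    have hBAi : B ∩ A = A ∩ B := Finset.inter_comm B A
    refine witness_not_regular k hd1 r' p' s B A e hBcard hAcard hsB hsA
      (by rw [hBAi]; exact hABcard)
      ((p' s (A.erase s)).val) (by omega) (p' s (A.erase s)).isLt h rfl
      (by rw [hBA]; exact he) (by rw [hBA]; exact heB') (by rw [hBA]; exact heA')

/-- Connectivity: a nonconstant value on the Johnson-graph slice gives an adjacent pair with
distinct values. -/
lemma exists_adjacent_pair {n d : ℕ} {r' : Fin n → ℕ}
    (p' : (i : Fin n) → Finset (Fin n) → Fin (r' i)) (i : Fin n) (hd : 2 ≤ d) :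
    ∀ (N : ℕ) (σ τ : Finset (Fin n)), (σ \ τ).card ≤ N →
      σ.card = d - 1 → i ∉ σ → τ.card = d - 1 → i ∉ τ → p' i σ ≠ p' i τ →
      ∃ (σ' τ' : Finset (Fin n)) (a b : Fin n),
        σ'.card = d - 1 ∧ i ∉ σ' ∧ i ∉ τ' ∧ a ∈ σ' ∧ b ∉ σ' ∧ a ≠ b ∧ b ≠ i ∧
        τ' = insert b (σ'.erase a) ∧ p' i σ' ≠ p' i τ' := by
  intro N
  induction N with
  | zero =>
    intro σ τ hcard hσc hiσ hτc hiτ hv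
    exfalso
    apply hv
    have h1 : σ \ τ = ∅ := Finset.card_eq_zero.mp (Nat.le_zero.mp hcard)
    have h2 : σ ⊆ τ := by
      intro x hx
      by_contra hxt
      have : x ∈ σ \ τ := Finset.mem_sdiff.mpr ⟨hx, hxt⟩
      rw [h1] at this
      exact absurd this (Finset.notMem_empty x)
    have : σ = τ := Finset.eq_of_subset_of_card_le h2 (by omega)
    rw [this]
  | succ N ih =>
    intro σ τ hcard hσc hiσ hτc hiτ hv
    have hne : σ ≠ τ := fun h => hv (by rw [h])
    have hsd : (σ \ τ).Nonempty := by
      rw [Finset.sdiff_nonempty]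
      intro hsub
      exact hne (Finset.eq_of_subset_of_card_le hsub (by omega))
    have htd : (τ \ σ).Nonempty := by
      rw [Finset.sdiff_nonempty]
      intro hsub
      exact hne (Finset.eq_of_subset_of_card_le hsub (by omega)).symm
    obtain ⟨a, ha⟩ := hsd
    obtain ⟨b, hb⟩ := htd
    rw [Finset.mem_sdiff] at ha hb
    have haσ : a ∈ σ := ha.1
    have hbσ : b ∉ σ := hb.2
    have hab : a ≠ b := fun h => hbσ (h ▸ haσ)
    have hbi : b ≠ i := fun h => hiτ (h ▸ hb.1)
    set μ := insert b (σ.erase a) with hμ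
    by_cases hvm : p' i σ ≠ p' i μ
    · exact ⟨σ, μ, a, b, hσc, hiσ,
        (by rw [hμ]; simp [Finset.mem_insert, Finset.mem_erase]
            exact ⟨fun h => hbi h.symm, fun _ => hiσ⟩), haσ, hbσ, hab, hbi, rfl, hvm⟩
    · push_neg at hvm
      have hμc : μ.card = d - 1 := by
        rw [hμ, Finset.card_insert_of_notMem (fun h => hbσ (Finset.mem_of_mem_erase h)),
          Finset.card_erase_of_mem haσ, hσc]
        omega
      have hiμ : i ∉ μ := by
        rw [hμ]
        simp only [Finset.mem_insert, Finset.mem_erase]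
        rintro (h | ⟨-, h⟩)
        · exact hbi h.symm
        · exact hiσ h
      have hmeasure : (μ \ τ).card ≤ N := by
        have h1 : μ \ τ = (σ \ τ).erase a := by
          ext x
          simp only [hμ, Finset.mem_sdiff, Finset.mem_insert, Finset.mem_erase]
          constructor
          · rintro ⟨h2 | ⟨h2, h3⟩, h4⟩
            · exact absurd (h2 ▸ hb.1) h4
            · exact ⟨h2, h3, h4⟩
          · rintro ⟨h2, h3, h4⟩
            exact ⟨Or.inr ⟨h2, h3⟩, h4⟩
        have h2 : a ∈ σ \ τ := Finset.mem_sdiff.mpr ⟨ha.1, ha.2⟩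
        rw [h1, Finset.card_erase_of_mem h2]
        omega
      exact ih μ τ hmeasure hμc hiμ hτc hiτ (by rw [← hvm]; exact hv)

lemma con1 (k : Type*) [Field k] {n d : ℕ} (hd : 2 ≤ d)
    (r' : Fin n → ℕ) (p' : (i : Fin n) → Finset (Fin n) → Fin (r' i))
    (i i₀ : Fin n) (hlt : i.val < i₀.val)
    (hinj : ∀ σ τ : Finset (Fin n), σ.card = d - 1 → i₀ ∉ σ → τ.card = d - 1 → i₀ ∉ τ →
      p' i₀ σ = p' i₀ τ → σ = τ)
    (σ τ : Finset (Fin n)) (a b : Fin n)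
    (hσc : σ.card = d - 1) (hiσ : i ∉ σ) (hiτ : i ∉ τ)
    (haσ : a ∈ σ) (hbσ : b ∉ σ) (hab : a ≠ b) (hbi : b ≠ i)
    (hτeq : τ = insert b (σ.erase a)) (hvne : p' i σ ≠ p' i τ)
    (hi₀ : i₀ ∈ σ ∪ τ) :
    ¬ RingTheory.Sequence.IsRegular
      (MvPolynomial ((i : Fin n) × Fin (r' i)) k ⧸ detIdeal k d r' p') (polDiffs k r') := by
  have hii₀ : i ≠ i₀ := fun h => by rw [h] at hlt; omega
  have hτc : τ.card = d - 1 := by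
    rw [hτeq, Finset.card_insert_of_notMem (fun h => hbσ (Finset.mem_of_mem_erase h)),
      Finset.card_erase_of_mem haσ, hσc]
    omega
  have hiστ : i ∉ σ ∪ τ := by
    rw [Finset.mem_union]
    rintro (h | h)
    exacts [hiσ h, hiτ h]
  have hστ : σ ∩ τ = σ.erase a := by
    ext x
    simp only [Finset.mem_inter, hτeq, Finset.mem_insert, Finset.mem_erase]
    constructor
    · rintro ⟨h1, h2 | ⟨h2, -⟩⟩
      · exact absurd (h2 ▸ h1) hbσ
      · exact ⟨h2, h1⟩
    · rintro ⟨h1, h2⟩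
      exact ⟨h2, Or.inr ⟨h1, h2⟩⟩
  have hστc : (σ ∪ τ).card = d := by
    have h1 := Finset.card_union_add_card_inter σ τ
    rw [hσc, hτc, hστ, Finset.card_erase_of_mem haσ, hσc] at h1
    omega
  have hABi : (insert i σ) ∩ (insert i τ) = insert i (σ ∩ τ) := by
    ext x
    simp only [Finset.mem_inter, Finset.mem_insert]
    tauto
  have hABu : (insert i σ) ∪ (insert i τ) = insert i (σ ∪ τ) := by
    ext x
    simp only [Finset.mem_union, Finset.mem_insert]
    tauto
  have hSe : ((insert i σ ∪ insert i τ)).erase i = σ ∪ τ := by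
    rw [hABu, Finset.erase_insert hiστ]
  have hAe : (insert i σ).erase i = σ := Finset.erase_insert hiσ
  have hBe : (insert i τ).erase i = τ := Finset.erase_insert hiτ
  have hAcard : (insert i σ).card = d := by
    rw [Finset.card_insert_of_notMem hiσ, hσc]; omega
  have hBcard : (insert i τ).card = d := by
    rw [Finset.card_insert_of_notMem hiτ, hτc]; omega
  have hABcard : ((insert i σ) ∩ (insert i τ)).card = d - 1 := by
    rw [hABi, hστ, Finset.card_insert_of_notMem
      (fun h => hiσ (Finset.mem_of_mem_erase h)), Finset.card_erase_of_mem haσ, hσc]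
    omega
  -- the two mismatch statements
  have hmisA : ∀ (t' : ℕ), i₀ ∈ insert i σ →
      clsv r' i t' ⟨i₀, p' i₀ (((insert i σ ∪ insert i τ).erase i).erase i₀)⟩
        ≠ clsv r' i t' ⟨i₀, p' i₀ ((insert i σ).erase i₀)⟩ := by
    intro t' hi₀A
    rw [clsv_of_gt r' i t' _ hlt, clsv_of_gt r' i t' _ hlt]
    apply sigma_mk_ne
    intro heq
    have hcard1 : (((insert i σ ∪ insert i τ).erase i).erase i₀).card = d - 1 := by
      rw [hSe, Finset.card_erase_of_mem hi₀, hστc]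
    have hcard2 : ((insert i σ).erase i₀).card = d - 1 := by
      rw [Finset.card_erase_of_mem hi₀A, hAcard]
    have heqset := hinj _ _ hcard1 (Finset.notMem_erase _ _) hcard2
      (Finset.notMem_erase _ _) heq
    have hi1 : i ∈ (insert i σ).erase i₀ := Finset.mem_erase.mpr ⟨hii₀, Finset.mem_insert_self i σ⟩
    rw [← heqset, hSe] at hi1
    exact hiστ (Finset.mem_of_mem_erase hi1)
  have hmisB : ∀ (t' : ℕ), i₀ ∈ insert i τ →
      clsv r' i t' ⟨i₀, p' i₀ (((insert i σ ∪ insert i τ).erase i).erase i₀)⟩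
        ≠ clsv r' i t' ⟨i₀, p' i₀ ((insert i τ).erase i₀)⟩ := by
    intro t' hi₀B
    rw [clsv_of_gt r' i t' _ hlt, clsv_of_gt r' i t' _ hlt]
    apply sigma_mk_ne
    intro heq
    have hcard1 : (((insert i σ ∪ insert i τ).erase i).erase i₀).card = d - 1 := by
      rw [hSe, Finset.card_erase_of_mem hi₀, hστc]
    have hcard2 : ((insert i τ).erase i₀).card = d - 1 := by
      rw [Finset.card_erase_of_mem hi₀B, hBcard]
    have heqset := hinj _ _ hcard1 (Finset.notMem_erase _ _) hcard2
      (Finset.notMem_erase _ _) heq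
    have hi1 : i ∈ (insert i τ).erase i₀ := Finset.mem_erase.mpr ⟨hii₀, Finset.mem_insert_self i τ⟩
    rw [← heqset, hSe] at hi1
    exact hiστ (Finset.mem_of_mem_erase hi1)
  refine witness_not_regular' k (by omega) r' p' i (insert i σ) (insert i τ) i₀
    hAcard hBcard (Finset.mem_insert_self i σ) (Finset.mem_insert_self i τ) hABcard
    ?_ ?_ (hmisA _) (hmisB _) (hmisA _) (hmisB _)
  · rw [hAe, hBe]
    exact hvne
  · rw [Finset.mem_erase]
    refine ⟨(fun h => hii₀ h.symm), ?_⟩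
    rw [hABu]
    exact Finset.mem_insert_of_mem hi₀

lemma con2 (k : Type*) [Field k] {n d : ℕ} (hd : 2 ≤ d)
    (r' : Fin n → ℕ) (p' : (i : Fin n) → Finset (Fin n) → Fin (r' i))
    (i i₀ : Fin n) (hlt : i₀.val < i.val)
    (hinj : ∀ σ τ : Finset (Fin n), σ.card = d - 1 → i₀ ∉ σ → τ.card = d - 1 → i₀ ∉ τ →
      p' i₀ σ = p' i₀ τ → σ = τ)
    (σ τ : Finset (Fin n)) (b : Fin n)
    (hσc : σ.card = d - 1) (hiσ : i ∉ σ) (hiτ : i ∉ τ)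
    (haσ : i₀ ∈ σ) (hbσ : b ∉ σ) (hab : i₀ ≠ b) (hbi : b ≠ i)
    (hτeq : τ = insert b (σ.erase i₀)) (hvne : p' i σ ≠ p' i τ)
    (hi₀τ : i₀ ∉ τ) :
    ¬ RingTheory.Sequence.IsRegular
      (MvPolynomial ((i : Fin n) × Fin (r' i)) k ⧸ detIdeal k d r' p') (polDiffs k r') := by
  have hii₀ : i ≠ i₀ := fun h => by rw [h] at hlt; omega
  have hτc : τ.card = d - 1 := by
    rw [hτeq, Finset.card_insert_of_notMem (fun h => hbσ (Finset.mem_of_mem_erase h)),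
      Finset.card_erase_of_mem haσ, hσc]
    omega
  have hAcard : (insert i σ).card = d := by
    rw [Finset.card_insert_of_notMem hiσ, hσc]; omega
  have hBcard : (insert i₀ τ).card = d := by
    rw [Finset.card_insert_of_notMem hi₀τ, hτc]; omega
  have hiB : i ∉ insert i₀ τ := by
    rw [Finset.mem_insert]
    rintro (h | h)
    exacts [hii₀ h, hiτ h]
  have hABeq : (insert i σ) ∩ (insert i₀ τ) = σ := by
    ext x
    simp only [Finset.mem_inter, Finset.mem_insert]
    constructor
    · rintro ⟨h1 | h1, h2⟩
      · rcases h2 with h2 | h2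
        · exact absurd (h1.symm.trans h2) hii₀
        · exact absurd (h1 ▸ h2) hiτ
      · exact h1
    · intro hx
      refine ⟨Or.inr hx, ?_⟩
      by_cases hxi : x = i₀
      · exact Or.inl hxi
      · refine Or.inr ?_
        rw [hτeq]
        exact Finset.mem_insert_of_mem (Finset.mem_erase.mpr ⟨hxi, hx⟩)
  have hBe : (insert i₀ τ).erase i₀ = τ := Finset.erase_insert hi₀τ
  have hAe : (insert i σ).erase i = σ := Finset.erase_insert hiσ
  have hiA' : i ∈ (insert i σ).erase i₀ :=
    Finset.mem_erase.mpr ⟨hii₀, Finset.mem_insert_self i σ⟩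
  have hA'c : ((insert i σ).erase i₀).card = d - 1 := by
    rw [Finset.card_erase_of_mem (Finset.mem_insert_of_mem haσ), hAcard]
  have hne : p' i₀ ((insert i σ).erase i₀) ≠ p' i₀ ((insert i₀ τ).erase i₀) := by
    rw [hBe]
    intro heq
    have heqset := hinj _ _ hA'c (Finset.notMem_erase _ _) hτc hi₀τ heq
    rw [heqset] at hiA'
    exact hiτ hiA'
  have hστu : σ ∪ τ = insert b σ := by
    ext x
    simp only [Finset.mem_union, hτeq, Finset.mem_insert, Finset.mem_erase]
    constructor
    · rintro (h | h | ⟨-, h⟩)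
      exacts [Or.inr h, Or.inl h, Or.inr h]
    · rintro (h | h)
      exacts [Or.inr (Or.inl h), Or.inl h]
  have hABu : (insert i σ) ∪ (insert i₀ τ) = insert i (σ ∪ τ) := by
    ext x
    simp only [Finset.mem_union, Finset.mem_insert]
    constructor
    · rintro ((h | h) | (h | h))
      exacts [Or.inl h, Or.inr (Or.inl h), Or.inr (Or.inl (h ▸ haσ)), Or.inr (Or.inr h)]
    · rintro (h | (h | h))
      exacts [Or.inl (Or.inl h), Or.inl (Or.inr h), Or.inr (Or.inr h)]
  have hiστ : i ∉ σ ∪ τ := by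
    rw [Finset.mem_union]
    rintro (h | h)
    exacts [hiσ h, hiτ h]
  have hkey : (((insert i σ) ∪ (insert i₀ τ)).erase i₀).erase i = τ := by
    rw [hABu, Finset.erase_right_comm, Finset.erase_insert hiστ, hστu,
      Finset.erase_insert_of_ne (fun h => hab h.symm), ← hτeq]
  have hmisA : ∀ (t' : ℕ), i ∈ insert i σ →
      clsv r' i₀ t' ⟨i, p' i ((((insert i σ) ∪ (insert i₀ τ)).erase i₀).erase i)⟩
        ≠ clsv r' i₀ t' ⟨i, p' i ((insert i σ).erase i)⟩ := by
    intro t' _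
    rw [clsv_of_gt r' i₀ t' _ hlt, clsv_of_gt r' i₀ t' _ hlt, hkey, hAe]
    exact sigma_mk_ne _ _ _ hvne.symm
  have hmisB : ∀ (t' : ℕ), i ∈ insert i₀ τ →
      clsv r' i₀ t' ⟨i, p' i ((((insert i σ) ∪ (insert i₀ τ)).erase i₀).erase i)⟩
        ≠ clsv r' i₀ t' ⟨i, p' i ((insert i₀ τ).erase i)⟩ := by
    intro t' h
    exact absurd h hiB
  refine witness_not_regular' k (by omega) r' p' i₀ (insert i σ) (insert i₀ τ) i
    hAcard hBcard (Finset.mem_insert_of_mem haσ) (Finset.mem_insert_self i₀ τ)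
    (by rw [hABeq, hσc]) hne ?_ (hmisA _) (hmisB _) (hmisA _) (hmisB _)
  · rw [Finset.mem_erase]
    exact ⟨hii₀, Finset.mem_union_left _ (Finset.mem_insert_self i σ)⟩

/-- Fix `i₀` and let `P` be the partitioning in which the parts of
`Σ_{i₀}^d` are all singletons while `Σ_{i'}^d` is a single part for every `i' ≠ i₀`. If `P'`
is a partitioning strictly refining `P`, then the ideal determined by `P'` is not a
polarization of `I_d`; hence the polarization determined by `P` is a maximal polarization. -/
theorem singleton_refinement_not_polarization (k : Type*) [Field k] {n d : ℕ}
    (hd : 2 ≤ d) (hdn : d ≤ n - 1) (i₀ : Fin n)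
    (r : Fin n → ℕ) (p : (i : Fin n) → Finset (Fin n) → Fin (r i))
    (hr : ∀ i, i ≠ i₀ → r i = 1)
    (hp : IsPartitioning n d r p)
    (hsingle : ∀ σ τ : Finset (Fin n),
      σ.card = d - 1 → i₀ ∉ σ → τ.card = d - 1 → i₀ ∉ τ → p i₀ σ = p i₀ τ → σ = τ)
    (r' : Fin n → ℕ) (p' : (i : Fin n) → Finset (Fin n) → Fin (r' i))
    (hp' : IsPartitioning n d r' p')
    (hrefines : ∀ (i : Fin n) (σ τ : Finset (Fin n)),
      σ.card = d - 1 → i ∉ σ → τ.card = d - 1 → i ∉ τ →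
      p' i σ = p' i τ → p i σ = p i τ)
    (hstrict : ∃ (i : Fin n) (σ τ : Finset (Fin n)),
      σ.card = d - 1 ∧ i ∉ σ ∧ τ.card = d - 1 ∧ i ∉ τ ∧
      p i σ = p i τ ∧ p' i σ ≠ p' i τ) :
    ¬ IsPolarization r' (sqfPow k n d) (detIdeal k d r' p') := by
  rintro ⟨-, hregseq, -⟩
  obtain ⟨i, σ0, τ0, hσ0c, hiσ0, hτ0c, hiτ0, hpeq, hpne⟩ := hstrict
  have hii₀ : i ≠ i₀ := by
    rintro rfl
    exact hpne (by rw [hsingle σ0 τ0 hσ0c hiσ0 hτ0c hiτ0 hpeq])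
  have hinj : ∀ σ τ : Finset (Fin n), σ.card = d - 1 → i₀ ∉ σ → τ.card = d - 1 → i₀ ∉ τ →
      p' i₀ σ = p' i₀ τ → σ = τ := fun σ τ h1 h2 h3 h4 h5 =>
    hsingle σ τ h1 h2 h3 h4 (hrefines i₀ σ τ h1 h2 h3 h4 h5)
  obtain ⟨σ, τ, a, b, hσc, hiσ, hiτ, haσ, hbσ, hab, hbi, hτeq, hvne⟩ :=
    exists_adjacent_pair p' i hd ((σ0 \ τ0).card) σ0 τ0 le_rfl hσ0c hiσ0 hτ0c hiτ0 hpne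
  have haτ : a ∉ τ := by
    rw [hτeq, Finset.mem_insert]
    rintro (h | h)
    exacts [hab h, (Finset.mem_erase.mp h).1 rfl]
  have hbτ : b ∈ τ := by rw [hτeq]; exact Finset.mem_insert_self b _
  have hvalne : i.val ≠ i₀.val := fun h => hii₀ (Fin.ext h)
  rcases Nat.lt_or_ge i.val i₀.val with hlt | hge
  · -- Construction 1 : step at i, mismatch at i₀ > i; need i₀ ∈ σ' ∪ τ'
    by_cases hcase : i₀ ∈ σ ∪ τ
    · exact con1 k hd r' p' i i₀ hlt hinj σ τ a b hσc hiσ hiτ haσ hbσ hab hbi hτeq hvne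
        hcase hregseq
    · rw [Finset.mem_union] at hcase
      push_neg at hcase
      obtain ⟨hi₀σ, hi₀τ⟩ := hcase
      have hai₀ : a ≠ i₀ := fun h => hi₀σ (h ▸ haσ)
      have hbi₀ : b ≠ i₀ := fun h => hi₀τ (h ▸ hbτ)
      have hi₀i : i₀ ≠ i := fun h => hii₀ h.symm
      set μ := insert i₀ (σ.erase a) with hμ
      have hi₀μ : i₀ ∈ μ := Finset.mem_insert_self _ _
      have hiμ : i ∉ μ := by
        rw [hμ, Finset.mem_insert]
        rintro (h | h)
        exacts [hii₀ h, hiσ (Finset.mem_of_mem_erase h)]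
      have hμc : μ.card = d - 1 := by
        rw [hμ, Finset.card_insert_of_notMem (fun h => hi₀σ (Finset.mem_of_mem_erase h)),
          Finset.card_erase_of_mem haσ, hσc]
        omega
      by_cases hvm : p' i σ ≠ p' i μ
      · -- pair (σ, μ, a, i₀)
        exact con1 k hd r' p' i i₀ hlt hinj σ μ a i₀ hσc hiσ hiμ haσ hi₀σ hai₀ hi₀i
          hμ hvm (Finset.mem_union_right _ hi₀μ) hregseq
      · push_neg at hvm
        -- pair (μ, τ, i₀, b)
        have hbμ : b ∉ μ := by
          rw [hμ, Finset.mem_insert]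
          rintro (h | h)
          exacts [hbi₀ h, hbσ (Finset.mem_of_mem_erase h)]
        have hτeq2 : τ = insert b (μ.erase i₀) := by
          rw [hμ, Finset.erase_insert (fun h => hi₀σ (Finset.mem_of_mem_erase h)), ← hτeq]
        exact con1 k hd r' p' i i₀ hlt hinj μ τ i₀ b hμc hiμ hiτ hi₀μ hbμ hbi₀.symm hbi
          hτeq2 (by rw [← hvm]; exact hvne) (Finset.mem_union_left _ hi₀μ) hregseq
  · have hlt' : i₀.val < i.val := by omega
    -- Construction 2 : step at i₀, mismatch at i > i₀; need i₀ ∈ σ' and i₀ ∉ τ'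
    by_cases h1 : i₀ ∈ σ
    · by_cases h2 : i₀ ∈ τ
      · -- i₀ in both : μ := insert b (σ.erase i₀)
        have hai₀ : a ≠ i₀ := fun h => haτ (h ▸ h2)
        have hbi₀ : b ≠ i₀ := fun h => hbσ (h ▸ h1)
        set μ := insert b (σ.erase i₀) with hμ
        have hiμ : i ∉ μ := by
          rw [hμ, Finset.mem_insert]
          rintro (h | h)
          exacts [hbi h.symm, hiσ (Finset.mem_of_mem_erase h)]
        have hi₀μ : i₀ ∉ μ := by
          rw [hμ, Finset.mem_insert]
          rintro (h | h)
          exacts [hbi₀ h.symm, (Finset.mem_erase.mp h).1 rfl]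
        have hμc : μ.card = d - 1 := by
          rw [hμ, Finset.card_insert_of_notMem (fun h => hbσ (Finset.mem_of_mem_erase h)),
            Finset.card_erase_of_mem h1, hσc]
          omega
        by_cases hvm : p' i σ ≠ p' i μ
        · -- pair (σ, μ, i₀, b) : i₀ ∈ σ, i₀ ∉ μ
          exact con2 k hd r' p' i i₀ hlt' hinj σ μ b hσc hiσ hiμ h1
            hbσ (fun h => hbσ (h ▸ h1)) hbi hμ hvm hi₀μ hregseq
        · push_neg at hvm
          -- pair (τ, μ, i₀, a) : μ = insert a (τ.erase i₀)
          have haei₀ : a ∈ σ.erase i₀ := Finset.mem_erase.mpr ⟨hai₀, haσ⟩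
          have hμeq : μ = insert a (τ.erase i₀) := by
            rw [hτeq, Finset.erase_insert_of_ne hbi₀,
              Finset.erase_right_comm, Finset.insert_comm,
              Finset.insert_erase haei₀, hμ]
          have hτc : τ.card = d - 1 := by
            rw [hτeq, Finset.card_insert_of_notMem (fun h => hbσ (Finset.mem_of_mem_erase h)),
              Finset.card_erase_of_mem haσ, hσc]
            omega
          have haτ' : a ∉ τ := haτ
          have hai : a ≠ i := fun h => hiσ (h ▸ haσ)
          exact con2 k hd r' p' i i₀ hlt' hinj τ μ a hτc hiτ hiμ h2 haτ'
            (fun h => haτ (h ▸ h2)) hai hμeq (fun h => hvne (by rw [h, hvm]))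
            hi₀μ hregseq
      · -- i₀ ∈ σ, i₀ ∉ τ : then i₀ = a
        have hi₀a : i₀ = a := by
          by_contra hne
          apply h2
          rw [hτeq]
          refine Finset.mem_insert_of_mem (Finset.mem_erase.mpr ⟨hne, h1⟩)
        subst hi₀a
        exact con2 k hd r' p' i i₀ hlt' hinj σ τ b hσc hiσ hiτ haσ hbσ hab hbi hτeq
          hvne h2 hregseq
    · by_cases h2 : i₀ ∈ τ
      · -- i₀ ∈ τ \ σ : swap the pair; then i₀ = b
        have hi₀b : i₀ = b := by
          rw [hτeq, Finset.mem_insert] at h2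
          rcases h2 with h | h
          · exact h
          · exact absurd (Finset.mem_of_mem_erase h) h1
        subst hi₀b
        have hσeq : σ = insert a (τ.erase i₀) := by
          rw [hτeq, Finset.erase_insert (fun h => h1 (Finset.mem_of_mem_erase h)),
            Finset.insert_erase haσ]
        have hτc : τ.card = d - 1 := by
          rw [hτeq, Finset.card_insert_of_notMem (fun h => hbσ (Finset.mem_of_mem_erase h)),
            Finset.card_erase_of_mem haσ, hσc]
          omega
        have hai : a ≠ i := fun h => hiσ (h ▸ haσ)
        exact con2 k hd r' p' i i₀ hlt' hinj τ σ a hτc hiτ hiσ h2 haτ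
          (fun h => haτ (h ▸ h2)) hai hσeq hvne.symm h1 hregseq
      · -- i₀ ∉ σ ∪ τ : μ := insert i₀ (σ.erase a)
        have hai₀ : a ≠ i₀ := fun h => h1 (h ▸ haσ)
        have hbi₀ : b ≠ i₀ := fun h => h2 (h ▸ hbτ)
        set μ := insert i₀ (σ.erase a) with hμ
        have hi₀μ : i₀ ∈ μ := Finset.mem_insert_self _ _
        have hiμ : i ∉ μ := by
          rw [hμ, Finset.mem_insert]
          rintro (h | h)
          exacts [hii₀ h, hiσ (Finset.mem_of_mem_erase h)]
        have hμc : μ.card = d - 1 := by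
          rw [hμ, Finset.card_insert_of_notMem (fun h => h1 (Finset.mem_of_mem_erase h)),
            Finset.card_erase_of_mem haσ, hσc]
          omega
        by_cases hvm : p' i μ ≠ p' i σ
        · -- pair (μ, σ, i₀, a) : σ = insert a (μ.erase i₀)
          have hσeq : σ = insert a (μ.erase i₀) := by
            rw [hμ, Finset.erase_insert (fun h => h1 (Finset.mem_of_mem_erase h)),
              Finset.insert_erase haσ]
          have haμ : a ∉ μ := by
            rw [hμ, Finset.mem_insert]
            rintro (h | h)
            exacts [hai₀ h, (Finset.mem_erase.mp h).1 rfl]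
          have hai : a ≠ i := fun h => hiσ (h ▸ haσ)
          exact con2 k hd r' p' i i₀ hlt' hinj μ σ a hμc hiμ hiσ hi₀μ haμ
            (fun h => hai₀ h.symm) hai hσeq hvm h1 hregseq
        · push_neg at hvm
          -- pair (μ, τ, i₀, b)
          have hbμ : b ∉ μ := by
            rw [hμ, Finset.mem_insert]
            rintro (h | h)
            exacts [hbi₀ h, hbσ (Finset.mem_of_mem_erase h)]
          have hτeq2 : τ = insert b (μ.erase i₀) := by
            rw [hμ, Finset.erase_insert (fun h => h1 (Finset.mem_of_mem_erase h)), ← hτeq]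
          exact con2 k hd r' p' i i₀ hlt' hinj μ τ b hμc hiμ hiτ hi₀μ hbμ
            (fun h => hbi₀ h.symm) hbi hτeq2 (by rw [hvm]; exact hvne) h2 hregseq
end

section
/- Let J be a polarization of D(I_2) = I_{n−1}, with minimal monomial generators m_1,…,m_n of degree n−1, where m_i depolarizes to ∏_{j≠i} x_j. Then any two generators are connected by a path of linear relations: for all i, j there is a sequence i = i_0, i_1, …, i_k = j such that for every l the least common multiple lcm(m_{i_l}, m_{i_{l+1}}) has degree n (i.e., there is a linear relation between m_{i_l} and m_{i_{l+1}}). -/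
open MvPolynomial

/-! ### Auxiliary combinatorial lemmas -/

section Aux1

variable {k : Type*} [Field k]

lemma aux_prodX {β V : Type*} (s : Finset β) (g : β → V) :
    ∏ v ∈ s, (X (g v) : MvPolynomial V k)
      = monomial (∑ v ∈ s, Finsupp.single (g v) 1) 1 := by
  classical
  induction s using Finset.induction_on with
  | empty => simp
  | @insert a s h ih =>
    have hx : (X (g a) : MvPolynomial V k) = monomial (Finsupp.single (g a) 1) 1 := by
      rw [← pow_one (X (g a)), X_pow_eq_monomial]
    rw [Finset.prod_insert h, Finset.sum_insert h, ih, hx, monomial_mul, one_mul]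

lemma aux_prodX_id {V : Type*} (s : Finset V) :
    ∏ v ∈ s, (X v : MvPolynomial V k) = monomial (∑ v ∈ s, Finsupp.single v 1) 1 := by
  simpa using aux_prodX s id

lemma aux_count {β V : Type*} [DecidableEq V] [DecidableEq β] (s : Finset β) (g : β → V)
    (j : V) : (∑ v ∈ s, Finsupp.single (g v) 1) j = (s.filter fun v => g v = j).card := by
  rw [Finset.sum_apply']
  simp only [Finsupp.single_apply]
  rw [Finset.sum_boole]
  simp

lemma aux_count_id {V : Type*} [DecidableEq V] (s : Finset V) (j : V) :
    (∑ v ∈ s, Finsupp.single v 1) j = (s.filter fun v => v = j).card := by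
  simpa using aux_count s id j

lemma aux_indicator_apply {V : Type*} [DecidableEq V] (s : Finset V) (v : V) :
    (∑ w ∈ s, Finsupp.single w 1) v = if v ∈ s then 1 else 0 := by
  rw [Finset.sum_apply']
  simp only [Finsupp.single_apply]
  exact Finset.sum_ite_eq' s v fun _ => 1

lemma aux_mem_span_sqfree {V : Type*} [DecidableEq V] {W : Finset V} {𝒮 : Set (Finset V)}
    (h : (∏ v ∈ W, (X v : MvPolynomial V k)) ∈
      Ideal.span ((fun s : Finset V => ∏ v ∈ s, (X v : MvPolynomial V k)) '' 𝒮)) :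
    ∃ s ∈ 𝒮, s ⊆ W := by
  classical
  have hfun : (fun s : Finset V => ∏ v ∈ s, (X v : MvPolynomial V k))
      = (fun u : V →₀ ℕ => monomial u 1) ∘ (fun s : Finset V => ∑ w ∈ s, Finsupp.single w 1) := by
    funext s
    exact aux_prodX s id
  rw [hfun, Set.image_comp] at h
  have hWeq : (∏ v ∈ W, (X v : MvPolynomial V k))
      = monomial (∑ w ∈ W, Finsupp.single w 1) 1 := aux_prodX W id
  rw [hWeq] at h
  have := MvPolynomial.mem_ideal_span_monomial_image.mp h
  have hW : (∑ w ∈ W, Finsupp.single w (1:ℕ)) ∈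
      (monomial (R := k) (∑ w ∈ W, Finsupp.single w 1) (1:k)).support := by
    rw [support_monomial, if_neg one_ne_zero]; exact Finset.mem_singleton_self _
  obtain ⟨si, hsi, hle⟩ := this _ hW
  obtain ⟨s, hs, rfl⟩ := hsi
  refine ⟨s, hs, fun v hv => ?_⟩
  have := hle v
  rw [aux_indicator_apply, aux_indicator_apply, if_pos hv] at this
  by_contra hvW
  rw [if_neg hvW] at this
  omega

lemma aux_rtg_list {α : Type*} (R : α → α → Prop) {i j : α}
    (h : Relation.ReflTransGen R i j) :
    ∃ l : List α, l ≠ [] ∧ l.head? = some i ∧ l.getLast? = some j ∧ l.Chain' R := by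
  induction h with
  | refl => exact ⟨[i], by simp, rfl, rfl, List.isChain_singleton _⟩
  | @tail b c _ hbc ih =>
    obtain ⟨l, hne, hh, hl, hc⟩ := ih
    refine ⟨l ++ [c], by simp, ?_, ?_, ?_⟩
    · rwa [List.head?_append_of_ne_nil _ hne]
    · simp
    · rw [show List.Chain' R (l ++ [c]) ↔ _ from List.isChain_append]
      refine ⟨hc, List.isChain_singleton _, fun x hx y hy => ?_⟩
      simp at hy
      rw [hl] at hx
      simp at hx
      subst hx; subst hy; exact hbc

lemma aux_rtg_bind {α : Type*} {r s : α → α → Prop} {a b : α}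
    (h : Relation.ReflTransGen r a b)
    (hrs : ∀ x y, r x y → Relation.ReflTransGen s x y) : Relation.ReflTransGen s a b := by
  induction h with
  | refl => exact .refl
  | tail _ h2 ih => exact ih.trans (hrs _ _ h2)

end Aux1

/-! ### The collapse machinery -/

section Col

variable {n : ℕ} {r : Fin n → ℕ}

/-- The list of "identification steps". -/
def stepsL (r : Fin n → ℕ) : List ((i : Fin n) × Fin (r i)) :=
  (List.finRange n).flatMap fun i =>
    ((List.finRange (r i)).filter fun j => 0 < j.val).map (Sigma.mk i)

/-- The difference polynomial of a step. -/
noncomputable def difP (k : Type*) [Field k] (r : Fin n → ℕ)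
    (v : (i : Fin n) × Fin (r i)) : MvPolynomial ((i : Fin n) × Fin (r i)) k :=
  X ⟨v.1, ⟨0, Nat.lt_of_le_of_lt (Nat.zero_le _) v.2.isLt⟩⟩ - X v

lemma polDiffs_eq (k : Type*) [Field k] (r : Fin n → ℕ) :
    polDiffs k r = (stepsL r).map (difP k r) := by
  simp only [polDiffs, stepsL, List.map_flatMap, List.map_map]
  rfl

/-- Collapse: identify the variables processed in `P` with the 0-th copy. -/
def col (P : List ((i : Fin n) × Fin (r i))) (v : (i : Fin n) × Fin (r i)) :
    (i : Fin n) × Fin (r i) :=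
  if v ∈ P then ⟨v.1, ⟨0, Nat.lt_of_le_of_lt (Nat.zero_le _) v.2.isLt⟩⟩ else v

lemma col_fst (P : List ((i : Fin n) × Fin (r i))) (v : (i : Fin n) × Fin (r i)) :
    (col P v).1 = v.1 := by
  unfold col; split <;> rfl

lemma col_mem {P : List ((i : Fin n) × Fin (r i))} {v : (i : Fin n) × Fin (r i)}
    (hv : v ∈ P) : col P v = ⟨v.1, ⟨0, Nat.lt_of_le_of_lt (Nat.zero_le _) v.2.isLt⟩⟩ :=
  if_pos hv

lemma col_not_mem {P : List ((i : Fin n) × Fin (r i))} {v : (i : Fin n) × Fin (r i)}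
    (hv : v ∉ P) : col P v = v :=
  if_neg hv

lemma col_of_snd_zero (P : List ((i : Fin n) × Fin (r i))) (v : (i : Fin n) × Fin (r i))
    (hv : v.2.val = 0) : col P v = v := by
  unfold col; split
  · obtain ⟨a, b⟩ := v; simp only at hv ⊢
    congr 1; exact Fin.ext hv.symm
  · rfl

lemma col_idem (P : List ((i : Fin n) × Fin (r i))) (v : (i : Fin n) × Fin (r i)) :
    col P (col P v) = col P v := by
  by_cases h : v ∈ P
  · rw [col_mem h]; exact col_of_snd_zero _ _ rfl
  · simp only [col_not_mem h]

lemma col_append_singleton (P : List ((i : Fin n) × Fin (r i)))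
    (w v : (i : Fin n) × Fin (r i)) :
    col (P ++ [w]) v = col [w] (col P v) := by
  by_cases h : v ∈ P
  · rw [col_mem (List.mem_append_left _ h), col_mem h]
    exact (col_of_snd_zero _ _ rfl).symm
  · rw [col_not_mem h]
    by_cases h2 : v = w
    · rw [col_mem (by simp [h2]), col_mem (by simp [h2])]
    · rw [col_not_mem (by simp [h, h2]), col_not_mem (by simp [h2])]

lemma col_single_cases {w x y : (i : Fin n) × Fin (r i)} (hxy : x ≠ y)
    (h : col [w] x = col [w] y) :
    (x = w ∧ y = ⟨w.1, ⟨0, Nat.lt_of_le_of_lt (Nat.zero_le _) w.2.isLt⟩⟩) ∨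
    (y = w ∧ x = ⟨w.1, ⟨0, Nat.lt_of_le_of_lt (Nat.zero_le _) w.2.isLt⟩⟩) := by
  by_cases hx : x ∈ [w] <;> by_cases hy : y ∈ [w]
  · exact absurd ((List.mem_singleton.mp hx).trans (List.mem_singleton.mp hy).symm) hxy
  · left
    have hxw := List.mem_singleton.mp hx
    rw [col_mem hx, col, if_neg hy] at h
    subst hxw
    exact ⟨rfl, h.symm⟩
  · right
    have hyw := List.mem_singleton.mp hy
    rw [col_mem hy, col, if_neg hx] at h
    subst hyw
    exact ⟨rfl, h⟩
  · rw [col, if_neg hx, col, if_neg hy] at h; exact absurd h hxy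

lemma mem_stepsL {v : (i : Fin n) × Fin (r i)} (hv : 0 < v.2.val) : v ∈ stepsL r := by
  unfold stepsL
  rw [List.mem_flatMap]
  exact ⟨v.1, List.mem_finRange _, by
    rw [List.mem_map]
    exact ⟨v.2, by simp [List.mem_filter, hv], rfl⟩⟩

lemma snd_pos_of_mem_stepsL {v : (i : Fin n) × Fin (r i)} (hv : v ∈ stepsL r) :
    0 < v.2.val := by
  unfold stepsL at hv
  rw [List.mem_flatMap] at hv
  obtain ⟨i, -, hv⟩ := hv
  rw [List.mem_map] at hv
  obtain ⟨j, hj, rfl⟩ := hv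
  simpa using (List.mem_filter.mp hj).2

lemma col_stepsL (v : (i : Fin n) × Fin (r i)) :
    col (stepsL r) v = ⟨v.1, ⟨0, Nat.lt_of_le_of_lt (Nat.zero_le _) v.2.isLt⟩⟩ := by
  by_cases h : 0 < v.2.val
  · exact col_mem (mem_stepsL h)
  · have hb : v.2.val = 0 := by omega
    rw [col_of_snd_zero _ _ hb]
    obtain ⟨a, b⟩ := v
    congr 1
    exact Fin.ext hb

end Col

/-! ### Extracting elementwise regularity -/

section Reg

variable {R : Type*} [CommRing R]

lemma aux_mk_mem_smul_top_iff (J I : Ideal R) (x : R) :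
    Ideal.Quotient.mk J x ∈ (I • ⊤ : Submodule R (R ⧸ J)) ↔ x ∈ J ⊔ I := by
  constructor
  · intro hx
    have key : ∀ u : R ⧸ J, u ∈ (I • ⊤ : Submodule R (R ⧸ J)) →
        ∃ z ∈ I, Ideal.Quotient.mk J z = u := by
      intro u hu
      refine Submodule.smul_induction_on hu ?_ ?_
      · intro i hi m _
        obtain ⟨s, rfl⟩ := Ideal.Quotient.mk_surjective (I := J) m
        refine ⟨i * s, I.mul_mem_right s hi, ?_⟩
        exact Submodule.Quotient.mk_smul J i s
      · rintro x y ⟨z1, hz1, rfl⟩ ⟨z2, hz2, rfl⟩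
        exact ⟨z1 + z2, I.add_mem hz1 hz2, by rw [map_add]⟩
    obtain ⟨z, hz, hzx⟩ := key _ hx
    have : x - z ∈ J := by
      rw [← Ideal.Quotient.eq] at *
      exact hzx.symm
    have hx' : x = (x - z) + z := by ring
    rw [hx']
    exact Submodule.add_mem_sup this hz
  · intro hx
    obtain ⟨y, hy, z, hz, rfl⟩ := Submodule.mem_sup.mp hx
    rw [map_add, Ideal.Quotient.eq_zero_iff_mem.mpr hy, zero_add]
    have : Ideal.Quotient.mk J z = z • (1 : R ⧸ J) := by
      rw [Algebra.smul_def, mul_one]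
      rfl
    rw [this]
    exact Submodule.smul_mem_smul hz Submodule.mem_top

lemma aux_reg_step (J : Ideal R) {rs : List R}
    (hw : RingTheory.Sequence.IsWeaklyRegular (R ⧸ J) rs)
    (m : ℕ) (hm : m < rs.length) (p : R)
    (hp : rs[m] * p ∈ J ⊔ Ideal.ofList (rs.take m)) :
    p ∈ J ⊔ Ideal.ofList (rs.take m) := by
  have hsm := hw.regular_mod_prev m hm
  set I := Ideal.ofList (rs.take m) with hI
  set θ := rs[m] with hθ
  have h0 : (Submodule.Quotient.mk (Ideal.Quotient.mk J (θ * p)) :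
      (R ⧸ J) ⧸ (I • ⊤ : Submodule R (R ⧸ J))) = 0 := by
    rw [Submodule.Quotient.mk_eq_zero]
    exact (aux_mk_mem_smul_top_iff J I _).mpr hp
  have h1 : θ • (Submodule.Quotient.mk (Ideal.Quotient.mk J p) :
      (R ⧸ J) ⧸ (I • ⊤ : Submodule R (R ⧸ J))) = 0 := by
    rw [← Submodule.Quotient.mk_smul, ← h0]
    exact congrArg Submodule.Quotient.mk (Submodule.Quotient.mk_smul J θ p).symm
  have h2 := hsm (a₁ := Submodule.Quotient.mk (Ideal.Quotient.mk J p)) (a₂ := 0)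
    (by show θ • Submodule.Quotient.mk ((Ideal.Quotient.mk J) p) = θ • (0 : _)
        rw [smul_zero]; exact h1)
  rw [Submodule.Quotient.mk_eq_zero] at h2
  exact (aux_mk_mem_smul_top_iff J I p).mp h2

end Reg

/-! ### The key step lemma -/

lemma hcore_lemma {k : Type*} [Field k] {n : ℕ} {r : Fin n → ℕ}
    {σ : Fin n → Finset ((i : Fin n) × Fin (r i))}
    {J : Ideal (MvPolynomial ((i : Fin n) × Fin (r i)) k)}
    {F : Fin n → Fin n → (i : Fin n) × Fin (r i)}
    (hF1 : ∀ i j, (F i j).1 = j)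
    (hF2 : ∀ i j, j ≠ i → F i j ∈ σ i)
    (hmemσ : ∀ i, ∀ v ∈ σ i, v.1 ≠ i ∧ v = F i v.1)
    (hgenJ : J = Ideal.span (Set.range fun i => ∏ v ∈ σ i, (X v : MvPolynomial _ k)))
    (P : List ((i : Fin n) × Fin (r i))) (vm : (i : Fin n) × Fin (r i))
    (hvm_pos : 0 < vm.2.val)
    (hregP : ∀ p, difP k r vm * p ∈ J ⊔ Ideal.ofList (P.map (difP k r)) →
      p ∈ J ⊔ Ideal.ofList (P.map (difP k r)))
    (a b : Fin n) (hab : a ≠ b) (hja : vm.1 ≠ a) (hjb : vm.1 ≠ b)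
    (ha0 : col P (F a vm.1) = col [vm] vm)
    (hbm : col P (F b vm.1) = vm)
    (hagree : ∀ l, l ≠ a → l ≠ b → l ≠ vm.1 → col P (F a l) = col P (F b l)) :
    Relation.ReflTransGen
      (fun x y => x ≠ y ∧ ∀ l, l ≠ x → l ≠ y → col P (F x l) = col P (F y l)) a b := by
  classical
  set D := Ideal.ofList (P.map (difP k r)) with hD
  have hcolinj : ∀ i, ∀ x ∈ σ i, ∀ y ∈ σ i, col P x = col P y → x = y := by
    intro i x hx y hy hxy
    have h1 : x.1 = y.1 := by rw [← col_fst P x, ← col_fst P y, hxy]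
    rw [(hmemσ i x hx).2, (hmemσ i y hy).2, h1]
  have hgenmem : ∀ i, (∏ v ∈ σ i, (X v : MvPolynomial _ k)) ∈ J := by
    intro i; rw [hgenJ]; exact Ideal.subset_span ⟨i, rfl⟩
  have hcong : ∀ i, (∏ v ∈ (σ i).image (col P), (X v : MvPolynomial _ k)) ∈ J ⊔ D := by
    intro i
    have h1 : Ideal.Quotient.mk D (∏ v ∈ σ i, X v)
        = Ideal.Quotient.mk D (∏ v ∈ (σ i).image (col P), X v) := by
      rw [Finset.prod_image (hcolinj i), map_prod, map_prod]
      apply Finset.prod_congr rfl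
      intro v hv
      by_cases hvP : v ∈ P
      · rw [col_mem hvP, Ideal.Quotient.eq]
        have h2 : (X v : MvPolynomial _ k)
            - X ⟨v.1, ⟨0, Nat.lt_of_le_of_lt (Nat.zero_le _) v.2.isLt⟩⟩
            = -(difP k r v) := by rw [difP]; ring
        rw [h2]
        exact neg_mem (Ideal.subset_span (List.mem_map_of_mem hvP))
      · rw [col_not_mem hvP]
    have h2 := Ideal.Quotient.eq.mp h1
    have h3 : (∏ v ∈ (σ i).image (col P), (X v : MvPolynomial _ k))
        = (∏ v ∈ σ i, X v) - ((∏ v ∈ σ i, X v) - (∏ v ∈ (σ i).image (col P), X v)) := by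
      ring
    rw [h3]
    exact Submodule.sub_mem _ (Submodule.mem_sup_left (hgenmem i)) (Submodule.mem_sup_right h2)
  set v0 := col [vm] vm with hv0def
  have hv0eq : v0 = ⟨vm.1, ⟨0, Nat.lt_of_le_of_lt (Nat.zero_le _) vm.2.isLt⟩⟩ :=
    col_mem (List.mem_singleton_self vm)
  have hv0fst : v0.1 = vm.1 := col_fst _ _
  have hv0snd : v0.2.val = 0 := by rw [hv0eq]
  have hv0m : v0 ≠ vm := by
    intro h
    have h2 : v0.2.val = vm.2.val := by rw [h]
    omega
  set Sa := (σ a).image (col P) with hSadef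
  set Sb := (σ b).image (col P) with hSbdef
  set U := Sa ∪ Sb with hUdef
  set T := (U.erase v0).erase vm with hTdef
  have hv0Sa : v0 ∈ Sa := by
    rw [← ha0]; exact Finset.mem_image_of_mem _ (hF2 a vm.1 hja)
  have hvmSb : vm ∈ Sb := by
    rw [← hbm]; exact Finset.mem_image_of_mem _ (hF2 b vm.1 hjb)
  have hfstSa : ∀ w ∈ Sa, w.1 ≠ a ∧ w = col P (F a w.1) := by
    intro w hw
    obtain ⟨u, hu, rfl⟩ := Finset.mem_image.mp hw
    obtain ⟨h1, h2⟩ := hmemσ a u hu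
    refine ⟨by rw [col_fst]; exact h1, ?_⟩
    rw [col_fst]
    conv_lhs => rw [h2]
  have hfstSb : ∀ w ∈ Sb, w.1 ≠ b ∧ w = col P (F b w.1) := by
    intro w hw
    obtain ⟨u, hu, rfl⟩ := Finset.mem_image.mp hw
    obtain ⟨h1, h2⟩ := hmemσ b u hu
    refine ⟨by rw [col_fst]; exact h1, ?_⟩
    rw [col_fst]
    conv_lhs => rw [h2]
  have hvmNa : vm ∉ Sa := by
    intro h
    obtain ⟨-, h2⟩ := hfstSa vm h
    rw [ha0] at h2
    exact hv0m h2.symm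
  have hv0Nb : v0 ∉ Sb := by
    intro h
    obtain ⟨-, h2⟩ := hfstSb v0 h
    rw [hv0fst, hbm] at h2
    exact hv0m h2
  have hXv0 : X v0 * (∏ v ∈ T, X v) ∈ J ⊔ D := by
    have hSaU : Sa ⊆ U.erase vm := fun x hx =>
      Finset.mem_erase.mpr ⟨fun h => hvmNa (h ▸ hx), Finset.mem_union_left _ hx⟩
    have h1 : X v0 * (∏ v ∈ T, (X v : MvPolynomial _ k)) = ∏ v ∈ U.erase vm, X v := by
      rw [hTdef, Finset.erase_right_comm]
      exact Finset.mul_prod_erase _ _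
        (Finset.mem_erase.mpr ⟨hv0m, Finset.mem_union_left _ hv0Sa⟩)
    rw [h1, ← Finset.prod_sdiff hSaU]
    exact Ideal.mul_mem_left _ _ (hcong a)
  have hXvm : X vm * (∏ v ∈ T, X v) ∈ J ⊔ D := by
    have hSbU : Sb ⊆ U.erase v0 := fun x hx =>
      Finset.mem_erase.mpr ⟨fun h => hv0Nb (h ▸ hx), Finset.mem_union_right _ hx⟩
    have h1 : X vm * (∏ v ∈ T, (X v : MvPolynomial _ k)) = ∏ v ∈ U.erase v0, X v := by
      rw [hTdef]
      exact Finset.mul_prod_erase _ _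
        (Finset.mem_erase.mpr ⟨fun h => hv0m h.symm, Finset.mem_union_right _ hvmSb⟩)
    rw [h1, ← Finset.prod_sdiff hSbU]
    exact Ideal.mul_mem_left _ _ (hcong b)
  have hθp : difP k r vm * (∏ v ∈ T, X v) ∈ J ⊔ D := by
    have hd : difP k r vm = X v0 - X vm := by rw [difP, ← hv0eq]
    rw [hd, sub_mul]
    exact Submodule.sub_mem _ hXv0 hXvm
  have hpJD := hregP _ hθp
  set ψ : MvPolynomial ((i : Fin n) × Fin (r i)) k →ₐ[k] MvPolynomial ((i : Fin n) × Fin (r i)) k :=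
    aeval (fun v => X (col P v)) with hψdef
  have hTfix : ∀ w ∈ T, col P w = w := by
    intro w hw
    have hwU : w ∈ U := Finset.mem_of_mem_erase (Finset.mem_of_mem_erase hw)
    rcases Finset.mem_union.mp hwU with h | h <;>
    · obtain ⟨u, hu, rfl⟩ := Finset.mem_image.mp h
      exact col_idem P u
  have hψp : ψ (∏ v ∈ T, X v) = ∏ v ∈ T, X v := by
    rw [map_prod]
    apply Finset.prod_congr rfl
    intro v hv
    simp only [hψdef, aeval_X, hTfix v hv]
  have hK : (∏ v ∈ T, (X v : MvPolynomial _ k)) ∈ Ideal.span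
      ((fun s : Finset ((i : Fin n) × Fin (r i)) => ∏ v ∈ s, (X v : MvPolynomial _ k)) ''
        (Set.range fun i => (σ i).image (col P))) := by
    have h1 : ψ (∏ v ∈ T, X v) ∈ Ideal.map ψ (J ⊔ D) := Ideal.mem_map_of_mem _ hpJD
    rw [hψp] at h1
    have h2 : Ideal.map ψ (J ⊔ D) ≤ Ideal.span
        ((fun s : Finset ((i : Fin n) × Fin (r i)) => ∏ v ∈ s, (X v : MvPolynomial _ k)) ''
          (Set.range fun i => (σ i).image (col P))) := by
      rw [Ideal.map_sup]
      apply sup_le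
      · rw [hgenJ, Ideal.map_span, Ideal.span_le]
        rintro x ⟨y, ⟨i, rfl⟩, rfl⟩
        show ψ (∏ v ∈ σ i, X v) ∈ _
        rw [map_prod]
        simp only [hψdef, aeval_X]
        rw [← Finset.prod_image (hcolinj i)]
        exact Ideal.subset_span ⟨(σ i).image (col P), ⟨i, rfl⟩, rfl⟩
      · rw [hD, Ideal.map_span, Ideal.span_le]
        rintro x ⟨y, hy, rfl⟩
        obtain ⟨w, hwP, rfl⟩ := List.mem_map.mp hy
        have hz : ψ (difP k r w) = 0 := by
          rw [difP, map_sub]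
          simp only [hψdef, aeval_X]
          rw [col_of_snd_zero _ _ rfl, col_mem hwP, sub_self]
        rw [hz]
        exact zero_mem _
    exact h2 h1
  obtain ⟨s, hsmem, hsub⟩ := aux_mem_span_sqfree hK
  obtain ⟨i, rfl⟩ := hsmem
  have hTfst : ∀ w ∈ T, w.1 ≠ vm.1 := by
    intro w hw
    have hwvm : w ≠ vm := Finset.ne_of_mem_erase hw
    have hw2 := Finset.mem_of_mem_erase hw
    have hwv0 : w ≠ v0 := Finset.ne_of_mem_erase hw2
    have hwU : w ∈ U := Finset.mem_of_mem_erase hw2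
    intro hfst
    rcases Finset.mem_union.mp hwU with h | h
    · obtain ⟨-, h2⟩ := hfstSa w h
      rw [hfst, ha0] at h2
      exact hwv0 h2
    · obtain ⟨-, h2⟩ := hfstSb w h
      rw [hfst, hbm] at h2
      exact hwvm h2
  have hij : i = vm.1 := by
    by_contra hij
    have h1 : col P (F i vm.1) ∈ (σ i).image (col P) :=
      Finset.mem_image_of_mem _ (hF2 i vm.1 (fun h => hij h.symm))
    exact hTfst _ (hsub h1) (by rw [col_fst, hF1])
  subst hij
  have hedge1 : ∀ l, l ≠ a → l ≠ vm.1 → col P (F a l) = col P (F vm.1 l) := by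
    intro l hla hlj
    have hmem : col P (F vm.1 l) ∈ T :=
      hsub (Finset.mem_image_of_mem _ (hF2 vm.1 l hlj))
    have hwU : col P (F vm.1 l) ∈ U :=
      Finset.mem_of_mem_erase (Finset.mem_of_mem_erase hmem)
    have hfst : (col P (F vm.1 l)).1 = l := by rw [col_fst, hF1]
    rcases Finset.mem_union.mp hwU with h | h
    · obtain ⟨-, h2⟩ := hfstSa _ h
      rw [hfst] at h2
      exact h2.symm
    · obtain ⟨hb1, h2⟩ := hfstSb _ h
      rw [hfst] at h2 hb1
      exact (hagree l hla hb1 hlj).trans h2.symm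
  have hedge2 : ∀ l, l ≠ vm.1 → l ≠ b → col P (F vm.1 l) = col P (F b l) := by
    intro l hlj hlb
    have hmem : col P (F vm.1 l) ∈ T :=
      hsub (Finset.mem_image_of_mem _ (hF2 vm.1 l hlj))
    have hwU : col P (F vm.1 l) ∈ U :=
      Finset.mem_of_mem_erase (Finset.mem_of_mem_erase hmem)
    have hfst : (col P (F vm.1 l)).1 = l := by rw [col_fst, hF1]
    rcases Finset.mem_union.mp hwU with h | h
    · obtain ⟨ha1, h2⟩ := hfstSa _ h
      rw [hfst] at h2 ha1
      exact h2.trans (hagree l ha1 hlb hlj)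
    · obtain ⟨-, h2⟩ := hfstSb _ h
      rw [hfst] at h2
      exact h2
  exact Relation.ReflTransGen.tail
    (Relation.ReflTransGen.single ⟨Ne.symm hja, hedge1⟩) ⟨hjb, hedge2⟩

/-- Let `J` be a polarization of `D(I_2) = I_{n-1}`, with minimal generators
`m_1, …, m_n` of degree `n-1` (given as squarefree monomials with supports `σ i`), where `m_i`
depolarizes to `∏_{j ≠ i} x_j`. Then any two of the generators are connected by a path of
linear relations (two squarefree monomial generators of degree `n-1` admit a linear relation
exactly when their lcm has degree `n`, i.e. when the union of their supports has `n`
elements). -/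
theorem polarization_of_dual_path_connected {k : Type*} [Field k] {n : ℕ} (hn : 2 ≤ n)
    (r : Fin n → ℕ) (σ : Fin n → Finset ((i : Fin n) × Fin (r i)))
    (J : Ideal (MvPolynomial ((i : Fin n) × Fin (r i)) k))
    (hJ : IsPolarization r (sqfPow k n (n - 1)) J)
    (hgen : J = Ideal.span (Set.range fun i => ∏ v ∈ σ i, (X v : MvPolynomial _ k)))
    (hcard : ∀ i, (σ i).card = n - 1)
    (hdepol : ∀ i, (MvPolynomial.rename Sigma.fst :
        MvPolynomial ((i : Fin n) × Fin (r i)) k →ₐ[k] MvPolynomial (Fin n) k)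
        (∏ v ∈ σ i, X v) = ∏ j ∈ Finset.univ.erase i, X j) :
    ∀ i j : Fin n, ∃ l : List (Fin n), l ≠ [] ∧ l.head? = some i ∧ l.getLast? = some j ∧
      l.Chain' (fun a b => (σ a ∪ σ b).card = n) := by
  classical
  -- Step 1: structure of the supports
  have hcount : ∀ i j : Fin n, ((σ i).filter (fun v => v.1 = j)).card
      = if j = i then 0 else 1 := by
    intro i j
    have h0 := hdepol i
    rw [map_prod] at h0
    simp only [rename_X] at h0
    rw [aux_prodX (σ i) Sigma.fst, aux_prodX_id (Finset.univ.erase i)] at h0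
    have hsum := monomial_left_injective (R := k) one_ne_zero h0
    have h1 := DFunLike.congr_fun hsum j
    rw [aux_count, aux_count_id] at h1
    rw [h1]
    by_cases hij : j = i
    · rw [if_pos hij, Finset.card_eq_zero, Finset.filter_eq_empty_iff]
      intro x hx
      rw [Finset.mem_erase] at hx
      intro h
      exact hx.1 (h.trans hij)
    · rw [if_neg hij, Finset.filter_eq',
        if_pos (Finset.mem_erase.mpr ⟨hij, Finset.mem_univ j⟩), Finset.card_singleton]
  have hr : ∀ l : Fin n, 0 < r l := by
    intro l
    have : Nontrivial (Fin n) := Fin.nontrivial_iff_two_le.mpr hn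
    obtain ⟨i, hil⟩ := exists_ne l
    have hc := hcount i l
    rw [if_neg (Ne.symm hil)] at hc
    obtain ⟨v, hv⟩ := Finset.card_eq_one.mp hc
    have hvmem := hv ▸ Finset.mem_singleton_self v
    have h2 := (Finset.mem_filter.mp hvmem).2
    have h3 : 0 < r v.1 := v.2.pos
    rwa [h2] at h3
  have hFex : ∀ i j : Fin n, ∃ v : (i : Fin n) × Fin (r i), v.1 = j ∧
      (j ≠ i → v ∈ σ i ∧ ∀ w ∈ σ i, w.1 = j → w = v) := by
    intro i j
    by_cases hij : j = i
    · exact ⟨⟨j, ⟨0, hr j⟩⟩, rfl, fun h => absurd hij h⟩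
    · have hc := hcount i j
      rw [if_neg hij] at hc
      obtain ⟨v, hv⟩ := Finset.card_eq_one.mp hc
      have hvm := hv ▸ Finset.mem_singleton_self v
      rw [Finset.mem_filter] at hvm
      refine ⟨v, hvm.2, fun _ => ⟨hvm.1, fun w hw hw1 => ?_⟩⟩
      have : w ∈ (σ i).filter (fun v => v.1 = j) := Finset.mem_filter.mpr ⟨hw, hw1⟩
      rwa [hv, Finset.mem_singleton] at this
  choose F hF1 hF2' using hFex
  have hF2 : ∀ i j, j ≠ i → F i j ∈ σ i := fun i j h => (hF2' i j h).1
  have hmemσ : ∀ i, ∀ v ∈ σ i, v.1 ≠ i ∧ v = F i v.1 := by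
    intro i v hv
    have hvi : v.1 ≠ i := by
      intro h
      have hc := hcount i i
      rw [if_pos rfl] at hc
      have : v ∈ (σ i).filter (fun w => w.1 = i) := Finset.mem_filter.mpr ⟨hv, h⟩
      rw [Finset.card_eq_zero.mp hc] at this
      exact absurd this (Finset.notMem_empty v)
    exact ⟨hvi, (hF2' i v.1 hvi).2 v hv rfl⟩
  -- Step 2: elementwise regularity
  have hw := hJ.2.1.toIsWeaklyRegular
  rw [polDiffs_eq] at hw
  have hreg' : ∀ m (hm : m < (stepsL r).length) p,
      difP k r ((stepsL r)[m]'hm) * p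
        ∈ J ⊔ Ideal.ofList (((stepsL r).take m).map (difP k r)) →
      p ∈ J ⊔ Ideal.ofList (((stepsL r).take m).map (difP k r)) := by
    intro m hm p hp
    have hm2 : m < ((stepsL r).map (difP k r)).length := by simpa using hm
    have htk : ((stepsL r).map (difP k r)).take m = ((stepsL r).take m).map (difP k r) :=
      List.map_take.symm
    have hget : ((stepsL r).map (difP k r))[m]'hm2 = difP k r ((stepsL r)[m]'hm) :=
      List.getElem_map _
    have h1 := aux_reg_step J hw m hm2 p (by rw [hget, htk]; exact hp)
    rwa [htk] at h1
  -- Step 3: the descending induction over identification steps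
  have hstep : ∀ m (hm : m < (stepsL r).length), ∀ x y : Fin n,
      (x ≠ y ∧ ∀ l, l ≠ x → l ≠ y →
        col ((stepsL r).take (m+1)) (F x l) = col ((stepsL r).take (m+1)) (F y l)) →
      Relation.ReflTransGen (fun x y => x ≠ y ∧ ∀ l, l ≠ x → l ≠ y →
        col ((stepsL r).take m) (F x l) = col ((stepsL r).take m) (F y l)) x y := by
    intro m hm x y hexy
    obtain ⟨hxy, hagree'⟩ := hexy
    have htk : (stepsL r).take (m+1) = (stepsL r).take m ++ [(stepsL r)[m]'hm] := by
      rw [List.take_succ]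
      simp [List.getElem?_eq_getElem hm]
    set P := (stepsL r).take m with hPdef
    set vm := (stepsL r)[m]'hm with hvmdef
    have hagree2 : ∀ l, l ≠ x → l ≠ y →
        col [vm] (col P (F x l)) = col [vm] (col P (F y l)) := by
      intro l h1 h2
      have := hagree' l h1 h2
      rwa [htk, col_append_singleton, col_append_singleton] at this
    by_cases hAP : ∀ l, l ≠ x → l ≠ y → col P (F x l) = col P (F y l)
    · exact Relation.ReflTransGen.single ⟨hxy, hAP⟩
    · push_neg at hAP
      obtain ⟨l0, hl0x, hl0y, hne0⟩ := hAP
      have hvm_pos : 0 < vm.2.val := snd_pos_of_mem_stepsL (List.getElem_mem hm)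
      have hregP := hreg' m hm
      have hfx : (col P (F x l0)).1 = l0 := by rw [col_fst, hF1]
      have hfy : (col P (F y l0)).1 = l0 := by rw [col_fst, hF1]
      have hv0col : (⟨vm.1, ⟨0, Nat.lt_of_le_of_lt (Nat.zero_le _) vm.2.isLt⟩⟩ :
          (i : Fin n) × Fin (r i)) = col [vm] vm :=
        (col_mem (List.mem_singleton_self vm)).symm
      have hsym : Symmetric (fun x y : Fin n => x ≠ y ∧ ∀ l, l ≠ x → l ≠ y →
          col P (F x l) = col P (F y l)) :=
        fun u w h => ⟨h.1.symm, fun l h1 h2 => (h.2 l h2 h1).symm⟩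
      have hagree_rest : ∀ l, l ≠ x → l ≠ y → l ≠ vm.1 →
          col P (F x l) = col P (F y l) := by
        intro l h1' h2' h3'
        by_contra hne2
        have hcx : (col P (F x l)).1 = l := by rw [col_fst, hF1]
        have hcy : (col P (F y l)).1 = l := by rw [col_fst, hF1]
        rcases col_single_cases hne2 (hagree2 l h1' h2') with ⟨hh, -⟩ | ⟨hh, -⟩
        · exact h3' (by rw [← hcx]; exact congrArg Sigma.fst hh)
        · exact h3' (by rw [← hcy]; exact congrArg Sigma.fst hh)
      rcases col_single_cases hne0 (hagree2 l0 hl0x hl0y) with ⟨h1, h2⟩ | ⟨h1, h2⟩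
      · -- col P (F x l0) = vm ; col P (F y l0) = v0
        have hl0 : l0 = vm.1 := by rw [← hfx, h1]
        subst hl0
        exact (@Relation.ReflTransGen.stdSymm _ _ ⟨fun _ _ h => hsym h⟩).symm _ _
          (hcore_lemma hF1 hF2 hmemσ hgen P vm hvm_pos hregP y x hxy.symm hl0y hl0x
            (h2.trans hv0col) h1
            (fun l ha hb hc => (hagree_rest l hb ha hc).symm))
      · -- col P (F y l0) = vm ; col P (F x l0) = v0
        have hl0 : l0 = vm.1 := by rw [← hfy, h1]
        subst hl0
        exact hcore_lemma hF1 hF2 hmemσ hgen P vm hvm_pos hregP x y hxy hl0x hl0y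
          (h2.trans hv0col) h1 hagree_rest
  have hconn : ∀ d m, m + d = (stepsL r).length → ∀ x y : Fin n,
      Relation.ReflTransGen (fun x y => x ≠ y ∧ ∀ l, l ≠ x → l ≠ y →
        col ((stepsL r).take m) (F x l) = col ((stepsL r).take m) (F y l)) x y := by
    intro d
    induction d with
    | zero =>
      intro m hm x y
      have hmlen : m = (stepsL r).length := by omega
      have htake : (stepsL r).take m = stepsL r := by rw [hmlen, List.take_length]
      by_cases hxy : x = y
      · subst hxy; exact Relation.ReflTransGen.refl
      · refine Relation.ReflTransGen.single ⟨hxy, fun l hlx hly => ?_⟩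
        rw [htake]
        have key : ∀ c : Fin n, col (stepsL r) (F c l) = ⟨l, ⟨0, hr l⟩⟩ := by
          intro c
          rw [col_stepsL]
          have h5 := hF1 c l
          revert h5
          generalize F c l = u
          obtain ⟨u1, u2⟩ := u
          intro h5
          simp only at h5
          subst h5
          rfl
        rw [key x, key y]
    | succ d ih =>
      intro m hm x y
      have h1 := ih (m+1) (by omega) x y
      exact aux_rtg_bind h1 (hstep m (by omega))
  -- Step 4: conclusion
  intro i j
  have h0 := hconn (stepsL r).length 0 (by simp) i j
  have hmono : ∀ x y : Fin n, (x ≠ y ∧ ∀ l, l ≠ x → l ≠ y →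
      col ((stepsL r).take 0) (F x l) = col ((stepsL r).take 0) (F y l)) →
      (σ x ∪ σ y).card = n := by
    intro x y hexy
    obtain ⟨hxy, hag⟩ := hexy
    simp only [List.take_zero] at hag
    have hag2 : ∀ l, l ≠ x → l ≠ y → F x l = F y l := by
      intro l h1 h2
      have := hag l h1 h2
      rwa [col_not_mem List.not_mem_nil, col_not_mem List.not_mem_nil] at this
    have hFba : F y x ∈ σ y := hF2 y x hxy
    have hun : σ x ∪ σ y = insert (F y x) (σ x) := by
      apply Finset.Subset.antisymm
      · intro w hw
        rcases Finset.mem_union.mp hw with h | h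
        · exact Finset.mem_insert_of_mem h
        · obtain ⟨h1, h2⟩ := hmemσ y w h
          by_cases hwx : w.1 = x
          · rw [h2, hwx]; exact Finset.mem_insert_self _ _
          · rw [h2, ← hag2 w.1 hwx h1]
            exact Finset.mem_insert_of_mem (hF2 x w.1 hwx)
      · intro w hw
        rcases Finset.mem_insert.mp hw with h | h
        · rw [h]; exact Finset.mem_union_right _ hFba
        · exact Finset.mem_union_left _ h
    rw [hun, Finset.card_insert_of_notMem, hcard x]
    · omega
    · intro h
      exact (hmemσ x _ h).1 (hF1 y x)
  obtain ⟨l, h1, h2, h3, h4⟩ := aux_rtg_list _ (Relation.ReflTransGen.mono hmono _ _ h0)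
  exact ⟨l, h1, h2, h3, h4⟩
end

section
/- Let T be a spanning tree of the complete graph on [n] with edges enumerated e_1,…,e_{n−1}, and let P = (m_1,…,m_n) be the associated polarization of I_{n−1}, where m_v = ∏_{u≠v} x_u^{(q(v,u))} and e_{q(v,u)} is the last edge on the unique path in T from v to u. Then the Alexander dual of P is D(P) = (x_i^{(p)} x_j^{(q)} : i ≠ j, where the unique path in T from i to j has first edge e_p and last edge e_q). -/
open MvPolynomial
open SimpleGraph

section TreeAux

variable {n : ℕ} {T : SimpleGraph (Fin n)}

/-- A walk between distinct vertices has a nonempty edge list. -/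
lemma tp_edges_ne_nil {a b : Fin n} (h : a ≠ b) (W : T.Walk a b) : W.edges ≠ [] := by
  intro hnil
  have hl := W.length_edges
  rw [hnil] at hl
  simp only [List.length_nil] at hl
  exact Walk.not_nil_of_ne h (Walk.nil_iff_length_eq.mpr hl.symm)

variable (hT : T.IsTree) (e : T.edgeSet ≃ Fin (n - 1)) (q : Fin n → Fin n → Fin (n - 1))
variable (hq : ∀ (v u : Fin n), v ≠ u → ∀ p : T.Path v u,
      ∃ (ed : Sym2 (Fin n)) (hed : ed ∈ T.edgeSet),
        p.1.edges.getLast? = some ed ∧ q v u = e ⟨ed, hed⟩)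

include hq in
/-- If two paths into `u` have the same last edge then `q` agrees on them. -/
lemma tp_q_eq {v v' u : Fin n} (hvu : v ≠ u) (hv'u : v' ≠ u)
    (W : T.Walk v u) (W' : T.Walk v' u) (hW : W.IsPath) (hW' : W'.IsPath)
    (h : W.edges.getLast? = W'.edges.getLast?) : q v u = q v' u := by
  obtain ⟨ed, hed, h1, h2⟩ := hq v u hvu ⟨W, hW⟩
  obtain ⟨ed', hed', h1', h2'⟩ := hq v' u hv'u ⟨W', hW'⟩
  rw [h2, h2']
  congr 1
  exact Subtype.ext (Option.some.inj (h1.symm.trans (h.trans h1')))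

include hT hq in
/-- Key tree fact: for `i ≠ j` and any `v`, either the path `v → i` ends like the
path `j → i`, or the path `v → j` ends like the path `i → j`. -/
lemma tp_lemB {i j : Fin n} (hij : i ≠ j) (v : Fin n) :
    (v ≠ i ∧ q v i = q j i) ∨ (v ≠ j ∧ q v j = q i j) := by
  classical
  rcases eq_or_ne v i with rfl | hvi
  · exact Or.inr ⟨hij, rfl⟩
  rcases eq_or_ne v j with rfl | hvj
  · exact Or.inl ⟨hvi, rfl⟩
  obtain ⟨P, hP⟩ := (hT.existsUnique_path v i).exists
  obtain ⟨Q, hQ⟩ := (hT.existsUnique_path i j).exists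
  have hQe : Q.edges ≠ [] := tp_edges_ne_nil hij Q
  by_cases hcase : P.edges.getLast? = Q.edges.head?
  · refine Or.inl ⟨hvi, tp_q_eq e q hq hvi (Ne.symm hij) P Q.reverse hP hQ.reverse ?_⟩
    rw [Walk.edges_reverse, List.getLast?_reverse]
    exact hcase
  · refine Or.inr ⟨hvj, ?_⟩
    have hdisj : ∀ w, w ∈ P.support → w ∈ Q.support.tail → False := by
      intro w hwP hwQt
      have hwQ : w ∈ Q.support := List.mem_of_mem_tail hwQt
      have hwi : w ≠ i := by
        rintro rfl
        have hnd := hQ.support_nodup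
        rw [Q.support_eq_cons] at hnd
        exact (List.nodup_cons.mp hnd).1 hwQt
      have hP₂ : (P.dropUntil w hwP).IsPath := hP.dropUntil hwP
      have hQ₁r : ((Q.takeUntil w hwQ).reverse).IsPath := (hQ.takeUntil hwQ).reverse
      have huniq : P.dropUntil w hwP = (Q.takeUntil w hwQ).reverse :=
        (hT.existsUnique_path w i).unique hP₂ hQ₁r
      apply hcase
      have e1 : P.edges.getLast? = (P.dropUntil w hwP).edges.getLast? := by
        conv_lhs => rw [← P.take_spec hwP]
        rw [Walk.edges_append,
          List.getLast?_append_of_ne_nil _ (tp_edges_ne_nil hwi (P.dropUntil w hwP))]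
      have e2 : Q.edges.head? = (Q.takeUntil w hwQ).edges.head? := by
        conv_lhs => rw [← Q.take_spec hwQ]
        rw [Walk.edges_append,
          List.head?_append_of_ne_nil _ (tp_edges_ne_nil (Ne.symm hwi) (Q.takeUntil w hwQ))]
      rw [e1, huniq, Walk.edges_reverse, List.getLast?_reverse, e2]
    have hS : (P.append Q).IsPath := by
      rw [Walk.isPath_def, Walk.support_append, List.nodup_append]
      exact ⟨hP.support_nodup, hQ.support_nodup.tail, fun w hw b hb hwb => hdisj w hw (by rw [hwb]; exact hb)⟩
    refine tp_q_eq e q hq hvj hij (P.append Q) Q hS hQ ?_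
    rw [Walk.edges_append, List.getLast?_append_of_ne_nil _ hQe]

include hT hq in
/-- The facing-pair lemma: any transversal contains a facing pair. -/
lemma tp_lemC {τ : Finset ((i : Fin n) × Fin (n - 1))} (hn : 2 ≤ n)
    (H : ∀ v : Fin n, ∃ u, u ≠ v ∧ (⟨u, q v u⟩ : (i : Fin n) × Fin (n - 1)) ∈ τ) :
    ∃ i j : Fin n, i ≠ j ∧ (⟨i, q j i⟩ : (i : Fin n) × Fin (n - 1)) ∈ τ ∧
      (⟨j, q i j⟩ : (i : Fin n) × Fin (n - 1)) ∈ τ := by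
  classical
  by_contra hno
  push_neg at hno
  choose g hg1 hg2 using H
  set M : Fin n → ℕ :=
    fun v => (Finset.univ.filter fun w => w ≠ g v ∧ q w (g v) = q v (g v)).card with hM
  have step : ∀ v, M v < M (g v) := by
    intro v
    have hij : g v ≠ g (g v) := fun h => (hg1 (g v)) h.symm
    have hqne : q (g (g v)) (g v) ≠ q v (g v) := by
      intro hqq
      exact hno (g v) (g (g v)) hij (hqq ▸ hg2 v) (hg2 (g v))
    have hsub : (Finset.univ.filter fun w => w ≠ g v ∧ q w (g v) = q v (g v)) ⊆
        (Finset.univ.filter fun w => w ≠ g (g v) ∧ q w (g (g v)) = q (g v) (g (g v))) := by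
      intro w hw
      simp only [Finset.mem_filter, Finset.mem_univ, true_and] at hw ⊢
      rcases tp_lemB hT e q hq hij w with ⟨h1, h2⟩ | h
      · exact absurd (h2.symm.trans hw.2) hqne
      · exact h
    apply Finset.card_lt_card
    refine (Finset.ssubset_iff_of_subset hsub).mpr ⟨g v, ?_, ?_⟩
    · exact Finset.mem_filter.mpr ⟨Finset.mem_univ _, hij, rfl⟩
    · simp only [Finset.mem_filter, Finset.mem_univ, true_and, not_and]
      intro h; exact absurd rfl h
  have key : ∀ m : ℕ, ∀ v, M v + m ≤ M (g^[m] v) := by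
    intro m
    induction m with
    | zero => intro v; simp
    | succ m ih =>
      intro v
      have h1 := ih v
      have h2 := step (g^[m] v)
      rw [Function.iterate_succ_apply']
      omega
  have hbound : ∀ v, M v ≤ n := by
    intro v
    refine le_trans (Finset.card_filter_le _ _) ?_
    simp
  have h1 := key (n + 1) ⟨0, by omega⟩
  have h2 := hbound (g^[n + 1] ⟨0, by omega⟩)
  omega

end TreeAux

section AlgAux

variable {k : Type*} [Field k] {V : Type*} [DecidableEq V]

lemma tp_prodX (τ : Finset V) :
    (∏ v ∈ τ, (X v : MvPolynomial V k)) =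
      monomial (∑ v ∈ τ, Finsupp.single v 1) 1 := by
  classical
  induction τ using Finset.induction with
  | empty => simp
  | insert a s h ih =>
    rw [Finset.prod_insert h, Finset.sum_insert h, ih, ← pow_one (X _),
      X_pow_eq_monomial, monomial_mul, one_mul]

lemma tp_expo_apply (τ : Finset V) (u : V) :
    (∑ v ∈ τ, Finsupp.single v (1 : ℕ)) u = if u ∈ τ then 1 else 0 := by
  classical
  rw [Finsupp.finset_sum_apply]
  simp [Finsupp.single_apply]

end AlgAux


/-- Let `T` be a spanning tree of the complete graph on `[n]` with edges
enumerated by `e : T.edgeSet ≃ Fin (n-1)`, and let `P = (m_1, …, m_n)` be the associated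
polarization of `I_{n-1}`, where `m_v = ∏_{u ≠ v} x_u^{(q v u)}` and `e_{q v u}` is the last
edge on the unique path in `T` from `v` to `u`. Then the Alexander dual of `P` is generated by
the monomials `x_i^{(p)} x_j^{(q)}` for `i ≠ j`, where the unique path in `T` from `i` to `j`
has first edge `e_p` and last edge `e_q`. -/
theorem tree_polarization_alexDual {k : Type*} [Field k] {n : ℕ} (hn : 2 ≤ n)
    (T : SimpleGraph (Fin n)) (hT : T.IsTree) (e : T.edgeSet ≃ Fin (n - 1))
    (q : Fin n → Fin n → Fin (n - 1))
    (hq : ∀ (v u : Fin n), v ≠ u → ∀ p : T.Path v u,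
      ∃ (ed : Sym2 (Fin n)) (hed : ed ∈ T.edgeSet),
        p.1.edges.getLast? = some ed ∧ q v u = e ⟨ed, hed⟩) :
    alexDual (Ideal.span (Set.range fun v : Fin n => ∏ u ∈ Finset.univ.erase v,
        (X (⟨u, q v u⟩ : (i : Fin n) × Fin (n - 1)) : MvPolynomial _ k))) =
      Ideal.span {m | ∃ (i j : Fin n), i ≠ j ∧ ∃ (w : T.Path i j)
        (ed₁ ed₂ : Sym2 (Fin n)) (h₁ : ed₁ ∈ T.edgeSet) (h₂ : ed₂ ∈ T.edgeSet),
        w.1.edges.head? = some ed₁ ∧ w.1.edges.getLast? = some ed₂ ∧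
        m = X (⟨i, e ⟨ed₁, h₁⟩⟩ : (i : Fin n) × Fin (n - 1)) * X ⟨j, e ⟨ed₂, h₂⟩⟩} := by
  classical
  set J : Ideal (MvPolynomial ((i : Fin n) × Fin (n - 1)) k) :=
    Ideal.span (Set.range fun v : Fin n => ∏ u ∈ Finset.univ.erase v,
      (X (⟨u, q v u⟩ : (i : Fin n) × Fin (n - 1)) : MvPolynomial _ k)) with hJ
  set σv : Fin n → Finset ((i : Fin n) × Fin (n - 1)) :=
    fun v => (Finset.univ.erase v).image
      (fun u => (⟨u, q v u⟩ : (i : Fin n) × Fin (n - 1))) with hσv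
  have hinj : ∀ v (a : Fin n), a ∈ Finset.univ.erase v → ∀ b ∈ Finset.univ.erase v,
      (⟨a, q v a⟩ : (i : Fin n) × Fin (n - 1)) = ⟨b, q v b⟩ → a = b :=
    fun v a _ b _ h => congrArg Sigma.fst h
  have hgen : ∀ v : Fin n,
      (∏ u ∈ Finset.univ.erase v,
        (X (⟨u, q v u⟩ : (i : Fin n) × Fin (n - 1)) : MvPolynomial _ k)) =
      ∏ s ∈ σv v, X s := fun v => (Finset.prod_image (hinj v)).symm
  have hgenJ : ∀ v, (∏ s ∈ σv v, (X s : MvPolynomial ((i : Fin n) × Fin (n - 1)) k)) ∈ J := by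
    intro v
    rw [← hgen]
    exact Ideal.subset_span ⟨v, rfl⟩
  -- membership in J of squarefree monomials
  have memJ : ∀ σ : Finset ((i : Fin n) × Fin (n - 1)),
      (∏ v ∈ σ, (X v : MvPolynomial ((i : Fin n) × Fin (n - 1)) k)) ∈ J →
      ∃ v, σv v ⊆ σ := by
    intro σ hσ
    have hfeq : (fun v : Fin n => ∏ u ∈ Finset.univ.erase v,
        (X (⟨u, q v u⟩ : (i : Fin n) × Fin (n - 1)) : MvPolynomial _ k)) =
        (fun d => (monomial d (1 : k))) ∘
          (fun v => ∑ s ∈ σv v, Finsupp.single s 1) := by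
      funext v
      simp only [Function.comp]
      rw [hgen, tp_prodX]
    rw [hJ, hfeq, Set.range_comp, tp_prodX, mem_ideal_span_monomial_image] at hσ
    obtain ⟨si, ⟨v, rfl⟩, hle⟩ := hσ (∑ s ∈ σ, Finsupp.single s 1) (by
      rw [support_monomial, if_neg one_ne_zero]; exact Finset.mem_singleton_self _)
    refine ⟨v, fun s hs => ?_⟩
    have := Finsupp.le_def.mp hle s
    rw [tp_expo_apply, tp_expo_apply, if_pos hs] at this
    by_contra hns
    rw [if_neg hns] at this
    omega
  apply le_antisymm
  · -- alexDual ≤ span of pairs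
    apply Ideal.span_le.mpr
    rintro m ⟨τ, rfl, hcond⟩
    have Hc : ∀ v : Fin n, ∃ u, u ≠ v ∧ (⟨u, q v u⟩ : (i : Fin n) × Fin (n - 1)) ∈ τ := by
      intro v
      obtain ⟨s, hs⟩ := hcond (σv v) (hgenJ v)
      rw [Finset.mem_inter] at hs
      obtain ⟨hsτ, hsσ⟩ := hs
      rw [hσv] at hsσ
      simp only [Finset.mem_image, Finset.mem_erase, Finset.mem_univ, and_true] at hsσ
      obtain ⟨u, huv, rfl⟩ := hsσ
      exact ⟨u, huv, hsτ⟩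
    obtain ⟨i, j, hij, h1, h2⟩ := tp_lemC hT e q hq hn Hc
    have hab : (⟨i, q j i⟩ : (i : Fin n) × Fin (n - 1)) ≠ ⟨j, q i j⟩ :=
      fun h => hij (congrArg Sigma.fst h)
    have hsubτ : ({⟨i, q j i⟩, ⟨j, q i j⟩} : Finset ((i : Fin n) × Fin (n - 1))) ⊆ τ := by
      intro s hs
      simp only [Finset.mem_insert, Finset.mem_singleton] at hs
      rcases hs with rfl | rfl
      exacts [h1, h2]
    rw [← Finset.prod_sdiff hsubτ]
    apply Ideal.mul_mem_left
    rw [Finset.prod_pair hab]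
    apply Ideal.subset_span
    obtain ⟨W, hW⟩ := (hT.existsUnique_path i j).exists
    obtain ⟨ed₂, hed₂, hlast, hq2⟩ := hq i j hij ⟨W, hW⟩
    obtain ⟨ed₁, hed₁, hlast', hq1⟩ := hq j i (Ne.symm hij) ⟨W.reverse, hW.reverse⟩
    have hhead : W.edges.head? = some ed₁ := by
      rwa [Walk.edges_reverse, List.getLast?_reverse] at hlast'
    exact ⟨i, j, hij, ⟨W, hW⟩, ed₁, ed₂, hed₁, hed₂, hhead, hlast, by rw [hq1, hq2]⟩
  · -- span of pairs ≤ alexDual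
    apply Ideal.span_le.mpr
    rintro m ⟨i, j, hij, W, ed₁, ed₂, h₁, h₂, hhead, hlast, rfl⟩
    obtain ⟨ed₂', hed₂', hlast', hq2⟩ := hq i j hij W
    have hq2' : q i j = e ⟨ed₂, h₂⟩ := by
      rw [hq2]
      congr 1
      exact Subtype.ext (Option.some.inj (hlast'.symm.trans hlast))
    obtain ⟨ed₁', hed₁', hl'', hq1⟩ := hq j i (Ne.symm hij) ⟨W.1.reverse, W.2.reverse⟩
    have hq1' : q j i = e ⟨ed₁, h₁⟩ := by
      rw [hq1]
      congr 1
      refine Subtype.ext (Option.some.inj ?_)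
      rw [← hl'', Walk.edges_reverse, List.getLast?_reverse, hhead]
    have hmeq : (X (⟨i, e ⟨ed₁, h₁⟩⟩ : (i : Fin n) × Fin (n - 1)) * X ⟨j, e ⟨ed₂, h₂⟩⟩ :
        MvPolynomial _ k) = X ⟨i, q j i⟩ * X ⟨j, q i j⟩ := by
      rw [hq1', hq2']
    rw [hmeq]
    have hab : (⟨i, q j i⟩ : (i : Fin n) × Fin (n - 1)) ≠ ⟨j, q i j⟩ :=
      fun h => hij (congrArg Sigma.fst h)
    apply Ideal.subset_span
    refine ⟨{⟨i, q j i⟩, ⟨j, q i j⟩}, (Finset.prod_pair hab).symm, ?_⟩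
    intro σ hσ
    obtain ⟨v, hv⟩ := memJ σ hσ
    rcases tp_lemB hT e q hq hij v with ⟨hvi, hqv⟩ | ⟨hvj, hqv⟩
    · refine ⟨⟨i, q j i⟩, Finset.mem_inter.mpr ⟨by simp, hv ?_⟩⟩
      rw [hσv, ← hqv]
      exact Finset.mem_image.mpr ⟨i, Finset.mem_erase.mpr ⟨Ne.symm hvi, Finset.mem_univ _⟩, rfl⟩
    · refine ⟨⟨j, q i j⟩, Finset.mem_inter.mpr ⟨by simp, hv ?_⟩⟩
      rw [hσv, ← hqv]
      exact Finset.mem_image.mpr ⟨j, Finset.mem_erase.mpr ⟨Ne.symm hvj, Finset.mem_univ _⟩, rfl⟩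
end
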